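/- arXiv:2108.10857 — 13 statements merged into one kernel-verified Lean document; each statement's English description precedes it below -/
import Mathlib

section
/- Let N ≥ 2 be even, κ_N = (−1)^{N/2+1}, and A_N : ℂ → ℂ defined by A_N(z) = (1/(2π)) ∫_ℝ e^{izξ − ξ^N} dξ. Then A_N satisfies the higher-order Airy equation: for every z ∈ ℂ, the (N−1)-st derivative of A_N at z equals −(κ_N/N) · z · A_N(z). -/
/-!
Differentiating under the integral sign, `A_N^{(N-1)}(z) = (2π)⁻¹ I^{N-1} ∫ ξ^{N-1} e^{Izξ-ξ^N} dξ`.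
The `ξ`-derivative `(Iz - Nξ^{N-1}) e^{Izξ-ξ^N}` of the integrand is integrable, so its integral
vanishes: `N ∫ ξ^{N-1} e^{Izξ-ξ^N} dξ = Iz ∫ e^{Izξ-ξ^N} dξ`. Finally `I^N = (-1)^{N/2} = -κ_N`.
All integrability comes from `a|ξ| - ξ^N ≤ a²/2 + 1 - ξ²/2`, i.e. domination by Gaussian moments.
-/

open Complex Filter MeasureTheory

variable {N : ℕ}

lemma I_pow_of_even (hN_even : Even N) : I ^ N = (-1) ^ (N / 2) := by
  obtain ⟨m, rfl⟩ := hN_even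
  rw [← two_mul, pow_mul, I_sq, Nat.mul_div_cancel_left m two_pos]

lemma sq_sub_one_le_pow_of_even (hN : 2 ≤ N) (hN_even : Even N) (x : ℝ) :
    x ^ 2 - 1 ≤ x ^ N := by
  rw [← hN_even.pow_abs, ← sq_abs]
  rcases le_total |x| 1 with hx | hx
  · nlinarith [abs_nonneg x, pow_nonneg (abs_nonneg x) N]
  · linarith [pow_le_pow_right₀ hx hN]

lemma integrable_abs_pow_mul_exp_mul_abs_sub_pow (hN : 2 ≤ N) (hN_even : Even N)
    (k : ℕ) (a : ℝ) :
    Integrable fun ξ : ℝ => |ξ| ^ k * Real.exp (a * |ξ| - ξ ^ N) := by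
  have hgauss : Integrable fun ξ : ℝ => |ξ| ^ k * Real.exp (-(1 / 2) * ξ ^ 2) := by
    have := (integrable_rpow_mul_exp_neg_mul_sq (b := 1 / 2) (by norm_num)
      (s := k) (by linarith [k.cast_nonneg (α := ℝ)])).norm
    simpa only [Real.rpow_natCast, norm_mul, norm_pow, Real.norm_eq_abs, Real.abs_exp] using this
  refine (hgauss.const_mul (Real.exp (a ^ 2 / 2 + 1))).mono' (by fun_prop) ?_
  refine Eventually.of_forall fun ξ => ?_
  have hexp : a * |ξ| - ξ ^ N ≤ a ^ 2 / 2 + 1 + -(1 / 2) * ξ ^ 2 := by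
    nlinarith [sq_sub_one_le_pow_of_even hN hN_even ξ, sq_nonneg (a - |ξ|), sq_abs ξ]
  rw [Real.norm_of_nonneg (by positivity), mul_left_comm, ← Real.exp_add]
  gcongr

lemma norm_pow_mul_cexp_le (k : ℕ) {z : ℂ} {a : ℝ} (hz : |z.im| ≤ a) (ξ : ℝ) :
    ‖(ξ : ℂ) ^ k * cexp (I * z * ξ - (ξ : ℂ) ^ N)‖ ≤ |ξ| ^ k * Real.exp (a * |ξ| - ξ ^ N) := by
  have hre : (I * z * ξ - (ξ : ℂ) ^ N).re = -z.im * ξ - ξ ^ N := by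
    simp [← ofReal_pow]
  rw [norm_mul, norm_pow, norm_real, Real.norm_eq_abs, norm_exp, hre]
  have hphase : -z.im * ξ ≤ a * |ξ| := by
    calc -z.im * ξ ≤ |z.im| * |ξ| := by rw [← abs_mul]; exact (neg_le_abs _).trans_eq' (by ring)
      _ ≤ a * |ξ| := by gcongr
  gcongr

lemma integrable_pow_mul_cexp (hN : 2 ≤ N) (hN_even : Even N) (k : ℕ) (z : ℂ) :
    Integrable fun ξ : ℝ => (ξ : ℂ) ^ k * cexp (I * z * ξ - (ξ : ℂ) ^ N) :=
  (integrable_abs_pow_mul_exp_mul_abs_sub_pow hN hN_even k |z.im|).mono' (by fun_prop)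
    (Eventually.of_forall (norm_pow_mul_cexp_le k le_rfl))

/-- `A_N = (2π)⁻¹ • airyMoment N 0`. -/
noncomputable def airyMoment (N k : ℕ) (z : ℂ) : ℂ :=
  ∫ ξ : ℝ, (ξ : ℂ) ^ k * cexp (I * z * ξ - (ξ : ℂ) ^ N)

lemma hasDerivAt_airyMoment (hN : 2 ≤ N) (hN_even : Even N) (k : ℕ) (z₀ : ℂ) :
    HasDerivAt (airyMoment N k) (I * airyMoment N (k + 1) z₀) z₀ := by
  have hbound : ∀ ξ : ℝ, ∀ x ∈ Metric.ball z₀ 1,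
      ‖I * ((ξ : ℂ) ^ (k + 1) * cexp (I * x * ξ - (ξ : ℂ) ^ N))‖
        ≤ |ξ| ^ (k + 1) * Real.exp ((|z₀.im| + 1) * |ξ| - ξ ^ N) := by
    intro ξ x hx
    rw [norm_mul, norm_I, one_mul]
    refine norm_pow_mul_cexp_le (k + 1) ?_ ξ
    have him : |x.im - z₀.im| ≤ 1 := by
      simpa only [sub_im] using (abs_im_le_norm (x - z₀)).trans (mem_ball_iff_norm.1 hx).le
    linarith [abs_sub_abs_le_abs_sub x.im z₀.im]
  have hderiv : ∀ ξ : ℝ, ∀ x : ℂ,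
      HasDerivAt (fun w : ℂ => (ξ : ℂ) ^ k * cexp (I * w * ξ - (ξ : ℂ) ^ N))
        (I * ((ξ : ℂ) ^ (k + 1) * cexp (I * x * ξ - (ξ : ℂ) ^ N))) x := fun ξ x =>
    ((((hasDerivAt_id x).const_mul I).mul_const (ξ : ℂ)).sub_const ((ξ : ℂ) ^ N)).cexp
      |>.const_mul ((ξ : ℂ) ^ k) |>.congr_deriv (by simp only [id]; ring)
  have := (hasDerivAt_integral_of_dominated_loc_of_deriv_le (Metric.ball_mem_nhds z₀ one_pos)
    (Eventually.of_forall fun x => (integrable_pow_mul_cexp hN hN_even k x).aestronglyMeasurable)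
    (integrable_pow_mul_cexp hN hN_even k z₀)
    ((integrable_pow_mul_cexp hN hN_even (k + 1) z₀).const_mul I).aestronglyMeasurable
    (Eventually.of_forall hbound)
    (integrable_abs_pow_mul_exp_mul_abs_sub_pow hN hN_even (k + 1) _)
    (Eventually.of_forall fun ξ x _ => hderiv ξ x)).2
  rwa [integral_const_mul] at this

lemma iteratedDeriv_airyMoment (hN : 2 ≤ N) (hN_even : Even N) (k n : ℕ) (z : ℂ) :
    iteratedDeriv n (airyMoment N k) z = I ^ n * airyMoment N (k + n) z := by
  induction n generalizing z with
  | zero => simp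
  | succ n ih =>
    rw [iteratedDeriv_succ, funext ih, ((hasDerivAt_airyMoment hN hN_even _ z).const_mul _).deriv,
      pow_succ, ← add_assoc]
    ring

lemma natCast_mul_airyMoment_pred (hN : 2 ≤ N) (hN_even : Even N) (z : ℂ) :
    N * airyMoment N (N - 1) z = I * z * airyMoment N 0 z := by
  have hderiv : ∀ ξ : ℝ, HasDerivAt (fun ξ : ℝ => cexp (I * z * ξ - (ξ : ℂ) ^ N))
      (I * z * ((ξ : ℂ) ^ 0 * cexp (I * z * ξ - (ξ : ℂ) ^ N))
        - N * ((ξ : ℂ) ^ (N - 1) * cexp (I * z * ξ - (ξ : ℂ) ^ N))) ξ := by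
    intro ξ
    have hphase : HasDerivAt (fun w : ℂ => I * z * w - w ^ N) (I * z - N * (ξ : ℂ) ^ (N - 1)) ξ :=
      (((hasDerivAt_id (ξ : ℂ)).const_mul (I * z)).sub (hasDerivAt_pow N (ξ : ℂ))).congr_deriv
        (by rw [mul_one])
    exact hphase.cexp.comp_ofReal.congr_deriv (by ring)
  have hint₀ := integrable_pow_mul_cexp hN hN_even 0 z
  have hint := integrable_pow_mul_cexp hN hN_even (N - 1) z
  have hibp := integral_eq_zero_of_hasDerivAt_of_integrable hderiv
    ((hint₀.const_mul _).sub (hint.const_mul _)) (by simpa using hint₀)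
  rw [integral_sub (hint₀.const_mul _) (hint.const_mul _), integral_const_mul,
    integral_const_mul] at hibp
  exact (sub_eq_zero.1 hibp).symm

/-- For even `N ≥ 2` and `κ_N = (-1)^{N/2+1}`, the Airy-type function
`A_N(z) = (1/(2π)) ∫_ℝ exp (I z ξ - ξ^N) dξ` satisfies the higher-order Airy equation
`A_N^{(N-1)}(z) = -(κ_N / N) z A_N(z)`. -/
theorem stmt_1 (N : ℕ) (hN : 2 ≤ N) (hNeven : Even N)
    (κ : ℝ) (hκ : κ = (-1 : ℝ) ^ (N / 2 + 1))
    (A : ℂ → ℂ)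
    (hA : ∀ z : ℂ, A z = (1 / (2 * Real.pi) : ℂ) *
      ∫ ξ : ℝ, Complex.exp (Complex.I * z * ξ - (ξ : ℂ) ^ N)) :
    ∀ z : ℂ, iteratedDeriv (N - 1) A z = -((κ : ℂ) / (N : ℂ)) * z * A z := by
  intro z
  have hA' : A = fun w => (1 / (2 * Real.pi) : ℂ) * airyMoment N 0 w :=
    funext fun w => by simp [hA, airyMoment]
  have hκI : (κ : ℂ) = -(I ^ (N - 1) * I) := by
    rw [← pow_succ, Nat.sub_add_cancel (by omega), I_pow_of_even hNeven, hκ]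
    push_cast
    ring
  have hM : airyMoment N (N - 1) z = I * z * airyMoment N 0 z / N :=
    eq_div_of_mul_eq (by exact_mod_cast (by omega : N ≠ 0))
      ((mul_comm _ _).trans (natCast_mul_airyMoment_pred hN hNeven z))
  rw [hA', iteratedDeriv_const_mul_field, iteratedDeriv_airyMoment hN hNeven, zero_add, hM, hκI]
  ring
end

section
/- Let N ≥ 3 be odd and κ_N = (−1)^{(N+1)/2}. For every z ∈ ℂ and every real c > 0, the function s ↦ e^{z(c+is) + κ_N (c+is)^N} is integrable on ℝ, and the value (1/(2π)) ∫_ℝ e^{z(c+is) + κ_N (c+is)^N} ds does not depend on the choice of c > 0. -/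
/-!
Write `N = n + 2` and `ξ = x + s i`. The normalisation of `κ` amounts to `κ i^N = -i`, so in the
binomial expansion of `κ ξ^N` the top term `-i s^N` is purely imaginary and the next one is the real
number `-N x s^{N-1}`, which is `≤ -N a |s|^{N-1}` for `x ≥ a > 0` since `N - 1` is even. The rest
is `O(|s|^{N-2})` uniformly for `x ∈ [a, b]`, hence `Re (z ξ + κ ξ^N) ≤ -a s^2` once `|s|` is large.
This gives integrability on every vertical line `Re ξ = c > 0` and uniform decay along horizontal
segments, so Cauchy's theorem on the rectangles `[c₁, c₂] × [-T, T]`, with `T → ∞`, identifies the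
two line integrals.
-/

open MeasureTheory Complex Filter Topology Set Asymptotics
open scoped Interval

theorem integral_vertical_eq_of_tendstoUniformlyOn {E : Type*} [NormedAddCommGroup E]
    [NormedSpace ℂ E] [CompleteSpace E] {f : ℂ → E} {c₁ c₂ : ℝ}
    (hf : DifferentiableOn ℂ f (re ⁻¹' [[c₁, c₂]]))
    (h₁ : Integrable fun s : ℝ => f (c₁ + s * I)) (h₂ : Integrable fun s : ℝ => f (c₂ + s * I))
    (hdecay : TendstoUniformlyOn (fun (T x : ℝ) => f (x + T * I)) 0 (cocompact ℝ) [[c₁, c₂]]) :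
    ∫ s : ℝ, f (c₁ + s * I) = ∫ s : ℝ, f (c₂ + s * I) := by
  have hrect : ∀ T : ℝ,
      (∫ x : ℝ in c₁..c₂, f (x + ((-T : ℝ) : ℂ) * I)) - (∫ x : ℝ in c₁..c₂, f (x + T * I)) +
        I • (∫ y : ℝ in (-T)..T, f (c₂ + y * I)) - I • (∫ y : ℝ in (-T)..T, f (c₁ + y * I)) = 0 :=
    fun T => integral_boundary_rect_eq_zero_of_differentiableOn f ⟨c₁, -T⟩ ⟨c₂, T⟩
      (hf.mono fun ξ hξ => hξ.1)
  have hvert : ∀ c : ℝ, Integrable (fun s : ℝ => f (c + s * I)) →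
      Tendsto (fun T : ℝ => ∫ y : ℝ in (-T)..T, f (c + y * I)) atTop
        (𝓝 (∫ s : ℝ, f (c + s * I))) :=
    fun c hc => intervalIntegral_tendsto_integral hc tendsto_neg_atTop_atBot tendsto_id
  have hhor : Tendsto (fun T : ℝ => ∫ x : ℝ in c₁..c₂, f (x + T * I)) (atBot ⊔ atTop) (𝓝 0) := by
    rw [cocompact_eq_atBot_atTop] at hdecay
    simpa using hdecay.tendsto_intervalIntegral_of_continuousOn (μ := volume) (.of_forall fun T =>
      hf.continuousOn.comp (Continuous.continuousOn (by fun_prop)) fun x hx => by simpa using hx)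
  have hlim := (((hhor.comp (tendsto_neg_atTop_atBot.mono_right le_sup_left)).sub
    (hhor.comp (tendsto_id.mono_right le_sup_right))).add
    ((hvert c₂ h₂).const_smul I)).sub ((hvert c₁ h₁).const_smul I)
  have hsides := tendsto_nhds_unique hlim (tendsto_const_nhds.congr fun T => (hrect T).symm :)
  rw [sub_zero, zero_add, sub_eq_zero] at hsides
  exact (smul_right_injective E I_ne_zero hsides).symm

theorem norm_add_pow_sub_pow_sub_mul_pow_le (x w : ℂ) (n : ℕ) :
    ‖(x + w) ^ (n + 2) - w ^ (n + 2) - (n + 2) * x * w ^ (n + 1)‖ ≤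
      2 ^ (n + 2) * ‖x‖ ^ 2 * (‖x‖ + ‖w‖) ^ n := by
  set g : ℕ → ℂ := fun k => x ^ k * w ^ (n + 2 - k) * ((n + 2).choose k : ℂ)
  have hsplit : (x + w) ^ (n + 2) - w ^ (n + 2) - (n + 2) * x * w ^ (n + 1) =
      ∑ k ∈ Finset.range (n + 1), g (k + 2) := by
    rw [add_pow, Finset.sum_range_succ', Finset.sum_range_succ']
    simp only [g, zero_add, Nat.choose_zero_right, Nat.choose_one_right, Nat.add_sub_add_right,
      Nat.sub_zero, pow_zero, pow_one]
    push_cast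
    ring
  have hterm : ∀ k ∈ Finset.range (n + 1),
      ‖g (k + 2)‖ ≤ ‖x‖ ^ 2 * (‖x‖ + ‖w‖) ^ n * (n + 2).choose (k + 2) := by
    intro k hk
    have hkn : k ≤ n := Nat.lt_succ_iff.mp (Finset.mem_range.mp hk)
    have hpow : ‖x‖ ^ k * ‖w‖ ^ (n - k) ≤ (‖x‖ + ‖w‖) ^ n :=
      calc ‖x‖ ^ k * ‖w‖ ^ (n - k) ≤ (‖x‖ + ‖w‖) ^ k * (‖x‖ + ‖w‖) ^ (n - k) := by
            gcongr <;> simp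
        _ = (‖x‖ + ‖w‖) ^ n := by rw [← pow_add, Nat.add_sub_cancel' hkn]
    simp only [g, norm_mul, norm_pow, norm_natCast, Nat.add_sub_add_right]
    calc ‖x‖ ^ (k + 2) * ‖w‖ ^ (n - k) * ((n + 2).choose (k + 2) : ℝ)
        = ‖x‖ ^ 2 * (‖x‖ ^ k * ‖w‖ ^ (n - k)) * (n + 2).choose (k + 2) := by ring
      _ ≤ _ := by gcongr
  have hchoose : ∑ k ∈ Finset.range (n + 1), ((n + 2).choose (k + 2) : ℝ) ≤ 2 ^ (n + 2) := by
    have h := Nat.sum_range_choose (n + 2)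
    rw [Finset.sum_range_succ', Finset.sum_range_succ'] at h
    exact_mod_cast (Nat.le_add_right _ _).trans ((Nat.le_add_right _ _).trans h.le)
  calc ‖(x + w) ^ (n + 2) - w ^ (n + 2) - (n + 2) * x * w ^ (n + 1)‖
      ≤ ∑ k ∈ Finset.range (n + 1), ‖x‖ ^ 2 * (‖x‖ + ‖w‖) ^ n * (n + 2).choose (k + 2) :=
        hsplit ▸ (norm_sum_le _ _).trans (Finset.sum_le_sum hterm)
    _ = ‖x‖ ^ 2 * (‖x‖ + ‖w‖) ^ n * ∑ k ∈ Finset.range (n + 1), ((n + 2).choose (k + 2) : ℝ) := by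
        rw [Finset.mul_sum]
    _ ≤ ‖x‖ ^ 2 * (‖x‖ + ‖w‖) ^ n * 2 ^ (n + 2) := by gcongr
    _ = _ := by ring

theorem isLittleO_mul_add_add_mul_add_pow_atTop (A b C : ℝ) {n : ℕ} (hn : 1 ≤ n) :
    (fun t : ℝ => A * (b + t) + C * (b + t) ^ n) =o[atTop] fun t => t ^ (n + 1) := by
  have hlin : (fun t : ℝ => b + t) =O[atTop] fun t => t :=
    (isLittleO_const_id_atTop b).isBigO.add (isBigO_refl _ _)
  refine IsLittleO.add ?_ ?_
  · refine (hlin.const_mul_left A).trans_isLittleO ?_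
    simpa using isLittleO_pow_pow_atTop_of_lt (𝕜 := ℝ) (p := 1) (q := n + 1) (by omega)
  · exact ((hlin.pow n).const_mul_left C).trans_isLittleO
      (isLittleO_pow_pow_atTop_of_lt n.lt_succ_self)

theorem neg_one_pow_succ_mul_I_pow_two_mul_add_one (j : ℕ) :
    (-1 : ℂ) ^ (j + 1) * I ^ (2 * j + 1) = -I := by
  rw [pow_succ I, pow_mul, I_sq, pow_succ, mul_mul_mul_comm, ← pow_add, ← two_mul, pow_mul]
  simp

section VerticalLine

variable {κ : ℂ} {n : ℕ}

theorem re_mul_add_mul_I_pow_le (hκ : κ * I ^ (n + 2) = -I) (x s : ℝ) :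
    (κ * (x + s * I) ^ (n + 2)).re ≤
      -((n + 2) * x * s ^ (n + 1)) + 2 ^ (n + 2) * x ^ 2 * (|x| + |s|) ^ n := by
  have hκ' : κ * I ^ (n + 1) = -1 := by
    apply mul_right_cancel₀ I_ne_zero
    rw [mul_assoc, ← pow_succ, hκ, neg_one_mul]
  have hκnorm : ‖κ‖ = 1 := by simpa using congrArg norm hκ
  have hlead : (κ * (s * I) ^ (n + 2)).re = 0 := by
    rw [mul_pow, mul_left_comm, hκ]
    simp [← ofReal_pow]
  have hnext : (κ * ((n + 2) * x * (s * I) ^ (n + 1))).re = -((n + 2) * x * s ^ (n + 1)) := by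
    rw [mul_pow, mul_left_comm, mul_left_comm _ _ (I ^ (n + 1)), hκ']
    simp [← ofReal_pow, ← ofReal_natCast]
  have hrem := norm_add_pow_sub_pow_sub_mul_pow_le x (s * I) n
  simp only [norm_real, norm_mul, norm_I, mul_one, Real.norm_eq_abs, sq_abs] at hrem
  calc (κ * (x + s * I) ^ (n + 2)).re
      = (κ * ((x + s * I) ^ (n + 2) - (s * I) ^ (n + 2) - (n + 2) * x * (s * I) ^ (n + 1))).re
          + (κ * (s * I) ^ (n + 2)).re + (κ * ((n + 2) * x * (s * I) ^ (n + 1))).re := by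
        rw [← add_re, ← add_re]; ring_nf
    _ ≤ ‖κ‖ * ‖(x + s * I) ^ (n + 2) - (s * I) ^ (n + 2) - (n + 2) * x * (s * I) ^ (n + 1)‖
          + -((n + 2) * x * s ^ (n + 1)) := by
        rw [hlead, hnext, add_zero, ← norm_mul]
        gcongr
        exact re_le_norm _
    _ ≤ _ := by rw [hκnorm, one_mul]; linarith

theorem eventually_norm_cexp_mul_add_pow_le (hκ : κ * I ^ (n + 2) = -I) (hn : Even (n + 1))
    (z : ℂ) {a b : ℝ} (ha : 0 < a) :
    ∀ᶠ s : ℝ in cocompact ℝ, ∀ x ∈ Icc a b,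
      ‖cexp (z * (x + s * I) + κ * (x + s * I) ^ (n + 2))‖ ≤ Real.exp (-a * s ^ 2) := by
  have hn1 : 1 ≤ n := by obtain ⟨j, hj⟩ := hn; omega
  rw [cocompact_eq_atBot_atTop, ← comap_abs_atTop, eventually_comap]
  filter_upwards
    [(isLittleO_mul_add_add_mul_add_pow_atTop ‖z‖ b (2 ^ (n + 2) * b ^ 2) hn1).bound ha,
      eventually_ge_atTop 1] with t hsmall ht s hst x hx
  subst hst
  have hx0 : 0 ≤ x := ha.le.trans hx.1
  have hxb : |x| ≤ b := (abs_of_nonneg hx0).trans_le hx.2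
  have hlin : (z * (x + s * I)).re ≤ ‖z‖ * (b + |s|) :=
    calc (z * (x + s * I)).re ≤ ‖z‖ * ‖(x : ℂ) + s * I‖ := (re_le_norm _).trans (norm_mul _ _).le
      _ ≤ ‖z‖ * (b + |s|) := by
        gcongr
        refine (norm_add_le _ _).trans ?_
        simpa using hxb
  have hsmall' : ‖z‖ * (b + |s|) + 2 ^ (n + 2) * b ^ 2 * (b + |s|) ^ n ≤ a * |s| ^ (n + 1) := by
    simpa [abs_of_nonneg (abs_nonneg s)] using (le_abs_self _).trans hsmall
  have hphase := re_mul_add_mul_I_pow_le hκ x s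
  rw [← hn.pow_abs s] at hphase
  have hrem :
      (2 : ℝ) ^ (n + 2) * x ^ 2 * (|x| + |s|) ^ n ≤ 2 ^ (n + 2) * b ^ 2 * (b + |s|) ^ n := by
    gcongr
    exact hx.2
  have hax : a * |s| ^ (n + 1) ≤ x * |s| ^ (n + 1) := by gcongr; exact hx.1
  have hN : 2 * (x * |s| ^ (n + 1)) ≤ (n + 2) * x * |s| ^ (n + 1) := by
    rw [mul_assoc]
    gcongr
    linarith [n.cast_nonneg (α := ℝ)]
  have hsq : a * |s| ^ 2 ≤ a * |s| ^ (n + 1) := by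
    gcongr
    omega
  rw [norm_exp, Real.exp_le_exp, add_re, ← sq_abs s]
  linarith

theorem tendstoUniformlyOn_cexp_mul_add_pow (hκ : κ * I ^ (n + 2) = -I) (hn : Even (n + 1))
    (z : ℂ) {a b : ℝ} (ha : 0 < a) :
    TendstoUniformlyOn (fun (s x : ℝ) => cexp (z * (x + s * I) + κ * (x + s * I) ^ (n + 2))) 0
      (cocompact ℝ) (Icc a b) := by
  have hgauss : Tendsto (fun s : ℝ => Real.exp (-a * s ^ 2)) (cocompact ℝ) (𝓝 0) := by
    simpa using tendsto_rpow_abs_mul_exp_neg_mul_sq_cocompact ha 0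
  rw [SeminormedAddGroup.tendstoUniformlyOn_zero]
  intro ε hε
  filter_upwards [eventually_norm_cexp_mul_add_pow_le hκ hn z ha (b := b),
    hgauss.eventually (gt_mem_nhds hε)] with s hs hsε x hx
  exact (hs x hx).trans_lt hsε

theorem integrable_cexp_mul_add_pow (hκ : κ * I ^ (n + 2) = -I) (hn : Even (n + 1))
    (z : ℂ) {c : ℝ} (hc : 0 < c) :
    Integrable fun s : ℝ => cexp (z * (c + s * I) + κ * (c + s * I) ^ (n + 2)) := by
  have hcont : Continuous fun s : ℝ => cexp (z * (c + s * I) + κ * (c + s * I) ^ (n + 2)) := by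
    fun_prop
  refine hcont.locallyIntegrable.integrable_of_isBigO_cocompact
    (g := fun s : ℝ => Real.exp (-c * s ^ 2)) (IsBigO.of_bound 1 ?_)
    ((integrable_exp_neg_mul_sq hc).integrableAtFilter _)
  filter_upwards [eventually_norm_cexp_mul_add_pow_le hκ hn z hc (b := c)] with s hs
  simpa using hs c ⟨le_rfl, le_rfl⟩

end VerticalLine

/-- For odd `N ≥ 3` and `κ_N = (-1)^{(N+1)/2}`, for every `z : ℂ` and every real `c > 0`,
the function `s ↦ exp (z (c + i s) + κ_N (c + i s)^N)` is integrable on `ℝ`, and the value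
`(1/(2π)) ∫_ℝ exp (z (c + i s) + κ_N (c + i s)^N) ds` does not depend on the choice of
`c > 0`. -/
theorem stmt_2 (N : ℕ) (hN : 3 ≤ N) (hNodd : Odd N)
    (κ : ℂ) (hκ : κ = (-1 : ℂ) ^ ((N + 1) / 2)) :
    (∀ z : ℂ, ∀ c : ℝ, 0 < c →
      Integrable (fun s : ℝ =>
        Complex.exp (z * ((c : ℂ) + (s : ℂ) * Complex.I) +
          κ * ((c : ℂ) + (s : ℂ) * Complex.I) ^ N))) ∧
    (∀ z : ℂ, ∀ c₁ c₂ : ℝ, 0 < c₁ → 0 < c₂ →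
      (1 / (2 * Real.pi) : ℂ) *
          ∫ s : ℝ, Complex.exp (z * ((c₁ : ℂ) + (s : ℂ) * Complex.I) +
            κ * ((c₁ : ℂ) + (s : ℂ) * Complex.I) ^ N) =
        (1 / (2 * Real.pi) : ℂ) *
          ∫ s : ℝ, Complex.exp (z * ((c₂ : ℂ) + (s : ℂ) * Complex.I) +
            κ * ((c₂ : ℂ) + (s : ℂ) * Complex.I) ^ N)) := by
  obtain ⟨n, rfl⟩ : ∃ n, N = n + 2 := ⟨N - 2, by omega⟩
  obtain ⟨j, hj⟩ := hNodd
  have hκI : κ * I ^ (n + 2) = -I := by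
    rw [hκ, hj, show (2 * j + 1 + 1) / 2 = j + 1 by omega]
    exact neg_one_pow_succ_mul_I_pow_two_mul_add_one j
  have heven : Even (n + 1) := ⟨j, by omega⟩
  refine ⟨fun z c hc => integrable_cexp_mul_add_pow hκI heven z hc,
    fun z c₁ c₂ h₁ h₂ => congrArg _ ?_⟩
  exact integral_vertical_eq_of_tendstoUniformlyOn (f := fun ξ => cexp (z * ξ + κ * ξ ^ (n + 2)))
    (by fun_prop : Differentiable ℂ _).differentiableOn
    (integrable_cexp_mul_add_pow hκI heven z h₁) (integrable_cexp_mul_add_pow hκI heven z h₂)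
    (tendstoUniformlyOn_cexp_mul_add_pow hκI heven z (lt_min h₁ h₂))
end

section
/- Let N ≥ 3 be odd, let ε ∈ {−1, 1}, and let z ∈ ℝ. Then the improper integral ∫_0^∞ cos(zs + ε s^N) ds converges, i.e., the limit as R → ∞ of ∫_0^R cos(zs + ε s^N) ds exists in ℝ. -/
open MeasureTheory Filter Set Real Topology

/-!
Since `ε = ±1` and `cos` is even, `cos (z s + ε s^N) = cos (ε z s + s^N)`, so the phase may be
taken to be `φ s = c s + s^N`, which is convex on `[0, ∞)` with `φ' → ∞`. Integrating by parts,
`cos φ = (sin φ / φ')' + sin φ · φ'' / φ'^2`: the boundary term tends to `0`, and the remainder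
is absolutely integrable because `φ'' / φ'^2 = (-1 / φ')'` is nonnegative with `-1 / φ' → 0`.
-/

section ConvexPhase

variable {φ φ' φ'' : ℝ → ℝ} {a : ℝ}

lemma hasDerivAt_sin_div_deriv {s : ℝ} (hφ : HasDerivAt φ (φ' s) s)
    (hφ' : HasDerivAt φ' (φ'' s) s) (hs : φ' s ≠ 0) :
    HasDerivAt (fun t => sin (φ t) / φ' t)
      (cos (φ s) - sin (φ s) * (φ'' s / φ' s ^ 2)) s :=
  (hφ.sin.div hφ' hs).congr_deriv (by field_simp)

lemma integrableOn_Ioi_deriv_div_sq (hφ' : ∀ s ∈ Ici a, HasDerivAt φ' (φ'' s) s)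
    (hpos : ∀ s ∈ Ici a, 0 < φ' s) (hφ''_nonneg : ∀ s ∈ Ioi a, 0 ≤ φ'' s)
    (htop : Tendsto φ' atTop atTop) :
    IntegrableOn (fun s => φ'' s / φ' s ^ 2) (Ioi a) := by
  refine integrableOn_Ioi_deriv_of_nonneg' (g := fun s => -(φ' s)⁻¹) (l := 0) (fun s hs => ?_)
    (fun s hs => div_nonneg (hφ''_nonneg s hs) (sq_nonneg _)) ?_
  · exact ((hφ' s hs).inv (hpos s hs).ne').neg.congr_deriv (by rw [neg_div, neg_neg])
  · simpa using (tendsto_inv_atTop_zero.comp htop).neg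

theorem exists_tendsto_intervalIntegral_cos_of_convex
    (hφ : ∀ s ∈ Ici a, HasDerivAt φ (φ' s) s) (hφ' : ∀ s ∈ Ici a, HasDerivAt φ' (φ'' s) s)
    (hφ''_nonneg : ∀ s ∈ Ici a, 0 ≤ φ'' s) (ha : 0 < φ' a) (htop : Tendsto φ' atTop atTop) :
    ∃ L, Tendsto (fun R => ∫ s in a..R, cos (φ s)) atTop (𝓝 L) := by
  have hmono : MonotoneOn φ' (Ici a) :=
    monotoneOn_of_hasDerivWithinAt_nonneg (convex_Ici a)
      (fun s hs => (hφ' s hs).continuousAt.continuousWithinAt)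
      (fun s hs => (hφ' s (interior_subset hs)).hasDerivWithinAt)
      (fun s hs => hφ''_nonneg s (interior_subset hs))
  have hpos : ∀ s ∈ Ici a, 0 < φ' s := fun s hs => ha.trans_le (hmono self_mem_Ici hs hs)
  have hφc : ContinuousOn φ (Ici a) := fun s hs => (hφ s hs).continuousAt.continuousWithinAt
  set g := fun s => sin (φ s) / φ' s
  set h := fun s => sin (φ s) * (φ'' s / φ' s ^ 2)
  have hh : IntegrableOn h (Ioi a) := by
    refine (integrableOn_Ioi_deriv_div_sq hφ' hpos
      (fun s hs => hφ''_nonneg s (Ioi_subset_Ici_self hs)) htop).bdd_mul (c := 1) ?_ ?_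
    · exact (continuous_sin.comp_continuousOn (hφc.mono Ioi_subset_Ici_self)).aestronglyMeasurable
        measurableSet_Ioi
    · exact Eventually.of_forall fun s => abs_sin_le_one _
  have hg : Tendsto g atTop (𝓝 0) :=
    isBoundedUnder_le_mul_tendsto_zero (f := fun s => sin (φ s))
      (isBoundedUnder_of ⟨1, fun s => (norm_eq_abs _).trans_le (abs_sin_le_one _)⟩)
      (tendsto_inv_atTop_zero.comp htop)
  have hparts : ∀ R ∈ Ici a, ∫ s in a..R, cos (φ s) = g R - g a + ∫ s in a..R, h s := by
    intro R hR
    have hsub : uIcc a R ⊆ Ici a := by rw [uIcc_of_le hR]; exact Icc_subset_Ici_self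
    have hcos : IntervalIntegrable (fun s => cos (φ s)) volume a R :=
      (continuous_cos.comp_continuousOn (hφc.mono hsub)).intervalIntegrable
    have hhR : IntervalIntegrable h volume a R :=
      (intervalIntegrable_iff_integrableOn_Ioc_of_le hR).2 (hh.mono_set Ioc_subset_Ioi_self)
    rw [← intervalIntegral.integral_eq_sub_of_hasDerivAt
      (fun s hs => hasDerivAt_sin_div_deriv (hφ s (hsub hs)) (hφ' s (hsub hs))
        (hpos s (hsub hs)).ne') (hcos.sub hhR), intervalIntegral.integral_sub hcos hhR]
    ring
  refine ⟨0 - g a + ∫ s in Ioi a, h s, ?_⟩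
  refine Tendsto.congr' (eventually_ge_atTop a |>.mono fun R hR => (hparts R hR).symm) ?_
  exact (hg.sub tendsto_const_nhds).add (intervalIntegral_tendsto_integral_Ioi a hh tendsto_id)

end ConvexPhase

theorem Continuous.exists_tendsto_intervalIntegral_of_exists {E : Type*} [NormedAddCommGroup E]
    [NormedSpace ℝ E] {f : ℝ → E} (hf : Continuous f) {a : ℝ} (b : ℝ)
    (h : ∃ L, Tendsto (fun R => ∫ s in a..R, f s) atTop (𝓝 L)) :
    ∃ L, Tendsto (fun R => ∫ s in b..R, f s) atTop (𝓝 L) := by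
  obtain ⟨L, hL⟩ := h
  refine ⟨(∫ s in b..a, f s) + L, (tendsto_const_nhds.add hL).congr fun R => ?_⟩
  exact intervalIntegral.integral_add_adjacent_intervals
    (hf.intervalIntegrable b a) (hf.intervalIntegrable a R)

theorem exists_tendsto_intervalIntegral_cos_mul_add_pow (c : ℝ) {N : ℕ} (hN : 2 ≤ N) :
    ∃ L, Tendsto (fun R => ∫ s in (0 : ℝ)..R, cos (c * s + s ^ N)) atTop (𝓝 L) := by
  have hφ : ∀ s, HasDerivAt (fun t => c * t + t ^ N) (c + N * s ^ (N - 1)) s := fun s =>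
    (((hasDerivAt_id s).const_mul c).add (hasDerivAt_pow N s)).congr_deriv (by simp)
  have hφ' : ∀ s, HasDerivAt (fun t => c + N * t ^ (N - 1))
      (N * ((N - 1 : ℕ) * s ^ (N - 1 - 1))) s :=
    fun s => ((hasDerivAt_pow (N - 1) s).const_mul (N : ℝ)).const_add c
  have htop : Tendsto (fun t : ℝ => c + N * t ^ (N - 1)) atTop atTop :=
    tendsto_atTop_add_const_left _ c
      ((tendsto_pow_atTop (by omega)).const_mul_atTop (by positivity))
  set a := |c| + 1
  have ha : 0 < c + N * a ^ (N - 1) := by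
    have h1 : a ≤ a ^ (N - 1) := le_self_pow₀ (by simp [a]) (by omega)
    have h2 : a ^ (N - 1) ≤ N * a ^ (N - 1) :=
      le_mul_of_one_le_left (by positivity) (by norm_cast; omega)
    linarith [neg_abs_le c]
  have hφ''_nonneg : ∀ s ∈ Ici a, (0 : ℝ) ≤ N * ((N - 1 : ℕ) * s ^ (N - 1 - 1)) := fun s hs => by
    have : 0 ≤ s := by simp only [mem_Ici] at hs; linarith [abs_nonneg c]
    positivity
  exact (continuous_cos.comp (by fun_prop)).exists_tendsto_intervalIntegral_of_exists 0
    (exists_tendsto_intervalIntegral_cos_of_convex (fun s _ => hφ s) (fun s _ => hφ' s)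
      hφ''_nonneg ha htop)

theorem stmt_4_general (N : ℕ) (hN : 3 ≤ N)
    (ε : ℝ) (hε : ε = -1 ∨ ε = 1) (z : ℝ) :
    ∃ L : ℝ,
      Filter.Tendsto (fun R : ℝ => ∫ s in (0:ℝ)..R, Real.cos (z * s + ε * s ^ N))
        Filter.atTop (nhds L) := by
  rcases hε with rfl | rfl
  · have hcos : ∀ s : ℝ, cos (z * s + -1 * s ^ N) = cos (-z * s + s ^ N) := fun s => by
      rw [← cos_neg]; ring_nf
    simpa only [hcos] using exists_tendsto_intervalIntegral_cos_mul_add_pow (-z) (by omega)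
  · simpa only [one_mul] using exists_tendsto_intervalIntegral_cos_mul_add_pow z (by omega)

/-- For odd `N ≥ 3`, `ε ∈ {-1, 1}` and real `z`, the improper integral
`∫_0^∞ cos (z s + ε s^N) ds` converges: the limit of `∫_0^R cos (z s + ε s^N) ds`
as `R → ∞` exists in `ℝ`. -/
theorem stmt_4 (N : ℕ) (hN : 3 ≤ N) (hNodd : Odd N)
    (ε : ℝ) (hε : ε = -1 ∨ ε = 1) (z : ℝ) :
    ∃ L : ℝ,
      Filter.Tendsto (fun R : ℝ => ∫ s in (0:ℝ)..R, Real.cos (z * s + ε * s ^ N))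
        Filter.atTop (nhds L) :=
  stmt_4_general N hN ε hε z
end

section
/- Let N ≥ 2 be a natural number, κ ∈ {−1, 1}, and let A : ℝ → ℝ be an infinitely differentiable function satisfying A^{(N−1)}(w) = −(κ/N) · w · A(w) for all w ∈ ℝ. Fix y ∈ ℝ and define v(x, t) = t^{−1/N} · A((x − y) · t^{−1/N}) for x ∈ ℝ and t > 0. Then v satisfies the higher-order heat equation ∂v/∂t (x, t) = κ · (∂^N v/∂x^N)(x, t) for all x ∈ ℝ and all t > 0. -/
/-!
With `α = -1/N` and `w = (x - y) t^α`, the chain rule gives `∂_t v = α t^(α-1) (w A)'(w)`,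
while scaling gives `∂_x^N v = t^α (t^α)^N A^{(N)}(w) = t^(α-1) A^{(N)}(w)`. Differentiating the
Airy equation once shows `A^{(N)} = -(κ/N) (w A)'`, so the two sides agree because `κ² = 1`.
-/

open Real

theorem iteratedDeriv_succ_of_iteratedDeriv_eq_const_mul_id_mul {n : ℕ} {A : ℝ → ℝ} {a : ℝ}
    (h : ∀ w, iteratedDeriv n A w = a * w * A w) (u : ℝ) :
    iteratedDeriv (n + 1) A u = a * deriv (fun w => w * A w) u := by
  have h' : iteratedDeriv n A = fun w => a * (w * A w) :=
    funext fun w => (h w).trans (mul_assoc ..)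
  rw [iteratedDeriv_succ, h', deriv_const_mul_field]

theorem iteratedDeriv_comp_sub_const_mul_const {n : ℕ} {f : ℝ → ℝ} (hf : ContDiff ℝ n f)
    (y s x : ℝ) :
    iteratedDeriv n (fun x => f ((x - y) * s)) x = s ^ n * iteratedDeriv n f ((x - y) * s) := by
  simp_rw [mul_comm _ s]
  rw [iteratedDeriv_comp_sub_const n (fun z => f (s * z)) y, iteratedDeriv_comp_const_mul hf]

theorem rpow_neg_one_div_natCast_pow {t : ℝ} (ht : 0 ≤ t) {N : ℕ} (hN : N ≠ 0) :
    (t ^ (-1 / N : ℝ)) ^ N = t⁻¹ := by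
  rw [← rpow_natCast, ← rpow_mul ht, div_mul_cancel₀ _ (Nat.cast_ne_zero.mpr hN), rpow_neg_one]

theorem hasDerivAt_rpow_mul_comp_mul_rpow {A : ℝ → ℝ} (hA : Differentiable ℝ A) (α z : ℝ)
    {t : ℝ} (ht : t ≠ 0) :
    HasDerivAt (fun t => t ^ α * A (z * t ^ α))
      (α * t ^ (α - 1) * deriv (fun w => w * A w) (z * t ^ α)) t := by
  set w := z * t ^ α
  have hpow := hasDerivAt_rpow_const (p := α) (Or.inl ht)
  have hprod : HasDerivAt (fun w => w * A w) (1 * A w + w * deriv A w) w :=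
    (hasDerivAt_id' w).mul (hA w).hasDerivAt
  rw [hprod.deriv]
  exact (hpow.mul ((hA w).hasDerivAt.comp t (hpow.const_mul z))).congr_deriv
    (by simp only [Function.comp_apply, w]; ring)

/-- Let `N ≥ 2`, `κ ∈ {-1, 1}`, and let `A : ℝ → ℝ` be a smooth function satisfying the
higher-order Airy equation `A^{(N-1)}(w) = -(κ/N) w A(w)`. Then the self-similar function
`v(x, t) = t^{-1/N} A((x - y) t^{-1/N})` satisfies the higher-order heat equation
`∂_t v = κ ∂_x^N v` for all `x ∈ ℝ` and `t > 0`. -/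
theorem stmt_5 (N : ℕ) (hN : 2 ≤ N) (κ : ℝ) (hκ : κ = -1 ∨ κ = 1)
    (A : ℝ → ℝ) (hA : ContDiff ℝ (⊤ : ℕ∞) A)
    (hAiry : ∀ w : ℝ, iteratedDeriv (N - 1) A w = -(κ / (N : ℝ)) * w * A w)
    (y : ℝ) (v : ℝ → ℝ → ℝ)
    (hv : ∀ x t : ℝ, v x t = t ^ (-(1:ℝ) / (N : ℝ)) * A ((x - y) * t ^ (-(1:ℝ) / (N : ℝ)))) :
    ∀ x t : ℝ, 0 < t →
      deriv (fun t' => v x t') t = κ * iteratedDeriv N (fun x' => v x' t) x := by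
  intro x t ht
  have hN0 : N ≠ 0 := by omega
  have hAN : iteratedDeriv N A = fun w => -(κ / N) * deriv (fun w => w * A w) w := by
    obtain ⟨n, rfl⟩ := Nat.exists_eq_add_one_of_ne_zero hN0
    exact funext (iteratedDeriv_succ_of_iteratedDeriv_eq_const_mul_id_mul hAiry)
  have hκκ : κ * κ = 1 := by rcases hκ with rfl | rfl <;> norm_num
  simp only [hv]
  rw [(hasDerivAt_rpow_mul_comp_mul_rpow (hA.differentiable (by simp)) _ _ ht.ne').deriv,
    iteratedDeriv_const_mul_field,
    iteratedDeriv_comp_sub_const_mul_const (hA.of_le (mod_cast le_top)),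
    rpow_neg_one_div_natCast_pow ht.le hN0, hAN, rpow_sub_one ht.ne']
  linear_combination
    (t ^ (-1 / N : ℝ) / t / N * deriv (fun w => w * A w) ((x - y) * t ^ (-1 / N : ℝ))) * hκκ
end

section
/- Let k be a nonnegative integer and let F : ℝ² → ℝ be infinitely differentiable. Define H(x, y) = ∫_0^1 u^k · F(y + u(x − y), y) du. Then H is infinitely differentiable on ℝ², it satisfies the transport equation (k + 1) H(x, y) + (x − y) · ∂H/∂x (x, y) = F(x, y) for all (x, y) ∈ ℝ², and it is the unique infinitely differentiable function on ℝ² satisfying this equation. -/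
/-!
Along the ray `z = y + s (x - y)` the transport operator `(k + 1) g + (z - y) ∂g` equals
`s⁻ᵏ d/ds [s^(k+1) g(z)]`. Integrating over `s ∈ [0, 1]`, where the factor `s^(k+1)` kills the
boundary term at `0`, shows that every differentiable solution is given by the integral formula.
Conversely, the substitution `v = s u` gives
`s^(k+1) H(y + s (x - y), y) = ∫₀ˢ vᵏ F(y + v (x - y), y) dv`, and differentiating at `s = 1`
yields the equation. Smoothness of the parametric integral follows by writing it as a
convolution with the indicator of the interval.
-/

open MeasureTheory Set Metric Convolution

section ParametricIntegral

variable {P E : Type*} [NormedAddCommGroup P] [NormedSpace ℝ P] [NormedAddCommGroup E]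
  [NormedSpace ℝ E] {n : ℕ∞} {f : P → ℝ → E}

theorem contDiff_setIntegral_Icc_of_contDiff (hf : ContDiff ℝ n ↿f) (a b : ℝ) :
    ContDiff ℝ n fun p => ∫ t in Icc a b, f p t := by
  let ψ : ContDiffBump (0 : ℝ) := ⟨|a| + |b| + 1, |a| + |b| + 2, by positivity, by linarith⟩
  -- `ψ = 1` on `[a, b]`, so the cut-off leaves the integral unchanged but makes the kernel
  -- compactly supported; it is reflected because the convolution at `0` evaluates it at `-t`.
  let g : P → ℝ → E := fun p u => ψ (-u) • f p (-u)
  have hconv : ContDiffOn ℝ n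
      (fun p => ((Icc a b).indicator (fun _ => (1 : ℝ)) ⋆[ContinuousLinearMap.lsmul ℝ ℝ] g p)
        ((fun _ => (0 : ℝ)) p)) univ := by
    refine contDiffOn_convolution_right_with_param_comp _ contDiffOn_const isOpen_univ
      (isCompact_closedBall 0 ψ.rOut) (fun p u _ hu => ?_)
      ((integrableOn_const measure_Icc_lt_top.ne).integrable_indicator measurableSet_Icc
        |>.locallyIntegrable) ?_
    · rw [mem_closedBall, dist_zero_right, not_le] at hu
      simp [g, ψ.zero_of_le_dist (x := -u) (by simpa using hu.le)]
    · exact ((ψ.contDiff.comp contDiff_snd.neg).smul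
        (hf.comp (contDiff_fst.prodMk contDiff_snd.neg))).contDiffOn
  refine contDiffOn_univ.1 (hconv.congr fun p _ => ?_)
  have hψ : ∀ t ∈ Icc a b, ψ t = 1 := fun t ht => ψ.one_of_mem_closedBall <| by
    rw [mem_closedBall, dist_zero_right, Real.norm_eq_abs, abs_le]
    constructor <;> linarith [ht.1, ht.2, neg_abs_le a, le_abs_self b, abs_nonneg a, abs_nonneg b]
  simp only [convolution, zero_sub, g, neg_neg, ContinuousLinearMap.lsmul_apply]
  rw [← integral_indicator measurableSet_Icc]
  congr 1 with t
  by_cases ht : t ∈ Icc a b <;> simp [ht, hψ]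

theorem contDiff_intervalIntegral_of_contDiff (hf : ContDiff ℝ n ↿f) (a b : ℝ) :
    ContDiff ℝ n fun p => ∫ t in a..b, f p t := by
  simp only [intervalIntegral, ← integral_Icc_eq_integral_Ioc]
  exact (contDiff_setIntegral_Icc_of_contDiff hf a b).sub
    (contDiff_setIntegral_Icc_of_contDiff hf b a)

end ParametricIntegral

theorem pow_succ_mul_integral_comp_mul_left (k : ℕ) (g : ℝ → ℝ) (s : ℝ) :
    s ^ (k + 1) * ∫ u in (0 : ℝ)..1, u ^ k * g (s * u) = ∫ v in (0 : ℝ)..s, v ^ k * g v := by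
  rcases eq_or_ne s 0 with rfl | hs
  · simp
  have h := intervalIntegral.integral_comp_mul_left (fun v => v ^ k * g v) hs (a := 0) (b := 1)
  simp only [mul_zero, mul_one, smul_eq_mul, mul_pow, mul_assoc] at h
  rw [intervalIntegral.integral_const_mul] at h
  rw [pow_succ, mul_comm _ s, mul_assoc, h, ← mul_assoc, mul_inv_cancel₀ hs, one_mul]

namespace Transport

noncomputable def op (k : ℕ) (a : ℝ) (g : ℝ → ℝ) (z : ℝ) : ℝ :=
  (k + 1) * g z + (z - a) * deriv g z

noncomputable def integral (k : ℕ) (f : ℝ → ℝ) (a x : ℝ) : ℝ :=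
  ∫ u in (0 : ℝ)..1, u ^ k * f (a + u * (x - a))

variable (k : ℕ) {f g : ℝ → ℝ} (a : ℝ)

theorem pow_succ_mul_integral (x s : ℝ) :
    s ^ (k + 1) * integral k f a (a + s * (x - a)) =
      ∫ v in (0 : ℝ)..s, v ^ k * f (a + v * (x - a)) := by
  rw [← pow_succ_mul_integral_comp_mul_left, integral]
  congr 2 with u
  rw [add_sub_cancel_left, mul_left_comm, mul_assoc]

theorem hasDerivAt_pow_succ_mul_comp (x s : ℝ) (hg : DifferentiableAt ℝ g (a + s * (x - a))) :
    HasDerivAt (fun t => t ^ (k + 1) * g (a + t * (x - a)))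
      (s ^ k * op k a g (a + s * (x - a))) s := by
  have hline : HasDerivAt (fun t : ℝ => a + t * (x - a)) (x - a) s := by
    simpa using ((hasDerivAt_id s).mul_const (x - a)).const_add a
  refine ((hasDerivAt_pow (k + 1) s).mul (hg.hasDerivAt.comp s hline)).congr_deriv ?_
  simp only [op, Function.comp_apply, add_sub_cancel_left, add_tsub_cancel_right, Nat.cast_add,
    Nat.cast_one]
  ring

theorem eq_integral_of_op_eq (hf : Continuous f) (hg : Differentiable ℝ g)
    (heq : ∀ z, op k a g z = f z) (x : ℝ) : g x = integral k f a x := by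
  have hderiv : ∀ s, HasDerivAt (fun t => t ^ (k + 1) * g (a + t * (x - a)))
      (s ^ k * f (a + s * (x - a))) s := fun s => by
    simpa only [heq] using hasDerivAt_pow_succ_mul_comp k a x s (hg _)
  have hftc := intervalIntegral.integral_eq_sub_of_hasDerivAt (fun s _ => hderiv s)
    ((by fun_prop : Continuous fun s : ℝ => s ^ k * f (a + s * (x - a))).intervalIntegrable 0 1)
  simpa [integral] using hftc.symm

theorem op_integral (hf : Continuous f) {x : ℝ} (hd : DifferentiableAt ℝ (integral k f a) x) :
    op k a (integral k f a) x = f x := by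
  have hcont : Continuous fun v : ℝ => v ^ k * f (a + v * (x - a)) := by fun_prop
  have hrhs := intervalIntegral.integral_hasDerivAt_right (hcont.intervalIntegrable 0 1)
    (hcont.stronglyMeasurableAtFilter _ _) hcont.continuousAt
  have hlhs := hasDerivAt_pow_succ_mul_comp k a x 1 (by simpa using hd)
  simp_rw [pow_succ_mul_integral] at hlhs
  simpa using hlhs.unique hrhs

end Transport

/-- Let `k ∈ ℕ` and let `F : ℝ² → ℝ` be smooth. Then
`H(x, y) = ∫_0^1 u^k F(y + u(x - y), y) du` is smooth on `ℝ²`, satisfies the transport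
equation `(k + 1) H(x,y) + (x - y) ∂_x H(x,y) = F(x,y)`, and is the unique smooth function
on `ℝ²` satisfying this equation. -/
theorem stmt_7 (k : ℕ) (F : ℝ → ℝ → ℝ)
    (hF : ContDiff ℝ (⊤ : ℕ∞) (fun p : ℝ × ℝ => F p.1 p.2))
    (H : ℝ → ℝ → ℝ)
    (hH : ∀ x y : ℝ, H x y = ∫ u in (0:ℝ)..1, u ^ k * F (y + u * (x - y)) y) :
    ContDiff ℝ (⊤ : ℕ∞) (fun p : ℝ × ℝ => H p.1 p.2) ∧
    (∀ x y : ℝ,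
      ((k : ℝ) + 1) * H x y + (x - y) * deriv (fun x' => H x' y) x = F x y) ∧
    (∀ G : ℝ → ℝ → ℝ, ContDiff ℝ (⊤ : ℕ∞) (fun p : ℝ × ℝ => G p.1 p.2) →
      (∀ x y : ℝ,
        ((k : ℝ) + 1) * G x y + (x - y) * deriv (fun x' => G x' y) x = F x y) →
      ∀ x y : ℝ, G x y = H x y) := by
  have hFy : ∀ y, Continuous (F · y) := fun y =>
    hF.continuous.comp (continuous_id.prodMk continuous_const)
  have hpartial : ∀ G : ℝ → ℝ → ℝ, ContDiff ℝ (⊤ : ℕ∞) (fun p : ℝ × ℝ => G p.1 p.2) →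
      ∀ y, Differentiable ℝ (G · y) := fun G hG y =>
    (hG.comp (contDiff_id.prodMk contDiff_const)).differentiable (by simp)
  have hHy : ∀ y, (H · y) = Transport.integral k (F · y) y := fun y =>
    funext fun x => hH x y
  have hHsmooth : ContDiff ℝ (⊤ : ℕ∞) (fun p : ℝ × ℝ => H p.1 p.2) := by
    simp_rw [hH]
    exact contDiff_intervalIntegral_of_contDiff
      (f := fun (p : ℝ × ℝ) u => u ^ k * F (p.2 + u * (p.1 - p.2)) p.2)
      ((contDiff_snd.pow k).mul (hF.comp (f := fun q : (ℝ × ℝ) × ℝ =>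
        (q.1.2 + q.2 * (q.1.1 - q.1.2), q.1.2)) (by fun_prop))) 0 1
  refine ⟨hHsmooth, fun x y => ?_, fun G hG hGeq x y => ?_⟩
  · have hop := Transport.op_integral k y (hFy y) (hHy y ▸ hpartial H hHsmooth y x)
    rwa [← hHy] at hop
  · rw [hH]
    exact Transport.eq_integral_of_op_eq k y (hFy y) (hpartial G hG y) (fun z => hGeq z y) x
end

section
/- Let u₀ : ℝ → ℝ be infinitely differentiable, let H₁(x, y) = ∫_0^1 u₀(y + u(x − y)) du, and let H₂(x, y) = ∫_0^1 u · (∂_x² H₁ + u₀ · H₁)(y + u(x − y), y) du (the unique smooth solution of 2 H₂(x,y) + (x − y) ∂_x H₂(x,y) = ∂_x² H₁(x,y) + u₀(x) H₁(x,y)). Then for every nonnegative integer j and every x ∈ ℝ, the j-th partial derivative of H₂ with respect to x, evaluated at y = x, equals u₀^{(j+2)}(x)/((j+2)(j+3)) + (1/(j+2)) · Σ_{ℓ=0}^{j} (1/(ℓ+1)) · C(j, ℓ) · u₀^{(ℓ)}(x) · u₀^{(j−ℓ)}(x), where C(j, ℓ) is the binomial coefficient. In particular, H₂(x, x) = (u₀''(x)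 + 3 u₀(x)²)/6. -/
open MeasureTheory Metric Finset
open scoped ContDiff

/-!
Write `Φ_m f (y, x) = ∫₀¹ uᵐ f(y + u(x - y)) du` (`segmentMoment f m y x`). Differentiating under
the integral sign gives `∂ₓ Φ_m f = Φ_{m+1} f'`, hence `∂ₓʲ Φ_m f = Φ_{m+j} f⁽ʲ⁾`, and on the
diagonal `Φ_m f (y, y) = f(y)/(m+1)`. Since `H₁(·, y) = Φ₀ u₀` and `H₂(·, y) = Φ₁ (∂ₓ² H₁ + u₀ H₁)`,
the derivatives of `H₂` on the diagonal follow from the Leibniz rule for `∂ₓʲ(u₀ H₁)`, after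
reflecting `ℓ ↦ j - ℓ` in the resulting sum.
-/

noncomputable def segmentMoment (f : ℝ → ℝ) (m : ℕ) (y x : ℝ) : ℝ :=
  ∫ u in (0:ℝ)..1, u ^ m * f (y + u * (x - y))

variable {f : ℝ → ℝ} {m : ℕ} {y : ℝ}

theorem segmentMoment_self : segmentMoment f m y y = f y / (m + 1) := by
  simp only [segmentMoment, sub_self, mul_zero, add_zero, intervalIntegral.integral_mul_const,
    integral_pow]
  simp [div_eq_inv_mul]

theorem hasDerivAt_segmentMoment (hf : ContDiff ℝ 1 f) (x₀ : ℝ) :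
    HasDerivAt (segmentMoment f m y) (segmentMoment (deriv f) (m + 1) y x₀) x₀ := by
  have hf' : Continuous (deriv f) := hf.continuous_deriv le_rfl
  obtain ⟨C, hC⟩ :=
    ((isCompact_closedBall x₀ 1).prod isCompact_Icc).exists_bound_of_continuousOn
      (f := fun p : ℝ × ℝ => p.2 ^ (m + 1) * deriv f (y + p.2 * (p.1 - y)))
      (by fun_prop : Continuous _).continuousOn
  refine (intervalIntegral.hasDerivAt_integral_of_dominated_loc_of_deriv_le (μ := volume)
    (F' := fun x u => u ^ (m + 1) * deriv f (y + u * (x - y))) (bound := fun _ => C)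
    (ball_mem_nhds x₀ one_pos) (.of_forall fun x => by fun_prop)
    (by apply Continuous.intervalIntegrable; fun_prop) (by fun_prop) ?_
    intervalIntegrable_const ?_).2
  · refine .of_forall fun u hu x hx => hC (x, u) ⟨ball_subset_closedBall hx, ?_⟩
    rw [Set.uIoc_of_le zero_le_one] at hu
    exact Set.Ioc_subset_Icc_self hu
  · refine .of_forall fun u _ x _ => ?_
    have hinner : HasDerivAt (fun x => y + u * (x - y)) u x := by
      simpa using (((hasDerivAt_id x).sub_const y).const_mul u).const_add y
    exact (((hf.differentiable one_ne_zero _).hasDerivAt.comp x hinner).const_mul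
      (u ^ m)).congr_deriv (by ring)

theorem deriv_segmentMoment (hf : ContDiff ℝ 1 f) :
    deriv (segmentMoment f m y) = segmentMoment (deriv f) (m + 1) y :=
  funext fun x => (hasDerivAt_segmentMoment hf x).deriv

theorem continuous_segmentMoment (hf : Continuous f) : Continuous (segmentMoment f m y) :=
  intervalIntegral.continuous_parametric_intervalIntegral_of_continuous' (by fun_prop) 0 1

theorem contDiff_segmentMoment {n : ℕ} (hf : ContDiff ℝ n f) :
    ContDiff ℝ n (segmentMoment f m y) := by
  induction n generalizing f m with
  | zero => exact contDiff_zero.mpr (continuous_segmentMoment (contDiff_zero.mp hf))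
  | succ n ih =>
    have hf1 : ContDiff ℝ 1 f := hf.of_le (by exact_mod_cast Nat.le_add_left 1 n)
    rw [Nat.cast_succ, contDiff_succ_iff_deriv] at hf ⊢
    exact ⟨fun x => (hasDerivAt_segmentMoment hf1 x).differentiableAt, by simp,
      deriv_segmentMoment hf1 ▸ ih hf.2.2⟩

theorem iteratedDeriv_segmentMoment {j : ℕ} (hf : ContDiff ℝ j f) :
    iteratedDeriv j (segmentMoment f m y) = segmentMoment (iteratedDeriv j f) (m + j) y := by
  induction j generalizing f m with
  | zero => simp
  | succ j ih =>
    have hf1 : ContDiff ℝ 1 f := hf.of_le (by exact_mod_cast Nat.le_add_left 1 j)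
    rw [Nat.cast_succ, contDiff_succ_iff_deriv] at hf
    rw [iteratedDeriv_succ', deriv_segmentMoment hf1, ih hf.2.2, ← iteratedDeriv_succ',
      add_right_comm, add_assoc]

theorem iteratedDeriv_segmentMoment_self {j : ℕ} (hf : ContDiff ℝ j f) :
    iteratedDeriv j (segmentMoment f m y) y = iteratedDeriv j f y / (m + j + 1) := by
  rw [iteratedDeriv_segmentMoment hf, segmentMoment_self, Nat.cast_add]

theorem iteratedDeriv_iteratedDeriv {𝕜 F : Type*} [NontriviallyNormedField 𝕜]
    [NormedAddCommGroup F] [NormedSpace 𝕜 F] (m n : ℕ) (f : 𝕜 → F) :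
    iteratedDeriv m (iteratedDeriv n f) = iteratedDeriv (m + n) f := by
  simp only [iteratedDeriv_eq_iterate, Function.iterate_add_apply]

theorem sum_range_choose_mul_div_reflect (a : ℕ → ℝ) (j : ℕ) :
    ∑ ℓ ∈ range (j + 1), (j.choose ℓ : ℝ) * a ℓ * (a (j - ℓ) / ((j - ℓ : ℕ) + 1)) =
      ∑ ℓ ∈ range (j + 1), 1 / ((ℓ : ℝ) + 1) * (j.choose ℓ : ℝ) * a ℓ * a (j - ℓ) := by
  rw [← sum_range_reflect]
  refine sum_congr rfl fun ℓ hℓ => ?_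
  have hℓj : ℓ ≤ j := Nat.lt_succ_iff.mp (mem_range.mp hℓ)
  rw [Nat.add_sub_cancel, Nat.sub_sub_self hℓj, Nat.choose_symm hℓj]
  ring

noncomputable def secondHadamardCoeff (u₀ : ℝ → ℝ) (y : ℝ) : ℝ → ℝ :=
  segmentMoment (iteratedDeriv 2 (segmentMoment u₀ 0 y) + u₀ * segmentMoment u₀ 0 y) 1 y

theorem iteratedDeriv_secondHadamardCoeff_self {u₀ : ℝ → ℝ} (hu₀ : ContDiff ℝ ∞ u₀) (j : ℕ)
    (x : ℝ) : iteratedDeriv j (secondHadamardCoeff u₀ x) x =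
      (iteratedDeriv (j + 2) u₀ x / ((j : ℝ) + 3) + ∑ ℓ ∈ range (j + 1),
        (j.choose ℓ : ℝ) * iteratedDeriv ℓ u₀ x *
          (iteratedDeriv (j - ℓ) u₀ x / ((j - ℓ : ℕ) + 1))) / ((j : ℝ) + 2) := by
  rw [secondHadamardCoeff]
  set H₁ := segmentMoment u₀ 0 x
  have hH₁ : ContDiff ℝ ∞ H₁ :=
    contDiff_infty.2 fun n => contDiff_segmentMoment (contDiff_infty.1 hu₀ n)
  have hH₁'' : ContDiff ℝ ∞ (iteratedDeriv 2 H₁) := by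
    rw [iteratedDeriv_eq_iterate]; exact hH₁.iterate_deriv 2
  have hprod : ContDiff ℝ ∞ (u₀ * H₁) := hu₀.mul hH₁
  have hsource : ContDiff ℝ ∞ (iteratedDeriv 2 H₁ + u₀ * H₁) := hH₁''.add hprod
  have hH₁_self (n : ℕ) : iteratedDeriv n H₁ x = iteratedDeriv n u₀ x / ((n : ℝ) + 1) := by
    rw [iteratedDeriv_segmentMoment_self (contDiff_infty.1 hu₀ n), Nat.cast_zero, zero_add]
  rw [iteratedDeriv_segmentMoment_self (contDiff_infty.1 hsource j),
    iteratedDeriv_add (contDiff_infty.1 hH₁'' j).contDiffAt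
      (contDiff_infty.1 hprod j).contDiffAt,
    iteratedDeriv_mul (contDiff_infty.1 hu₀ j).contDiffAt (contDiff_infty.1 hH₁ j).contDiffAt]
  simp only [iteratedDeriv_iteratedDeriv, hH₁_self]
  push_cast
  ring

/-- For smooth `u₀`, with `H₁(x,y) = ∫_0^1 u₀(y + u(x-y)) du` and
`H₂(x,y) = ∫_0^1 u (∂_x² H₁ + u₀ H₁)(y + u(x-y), y) du` (the unique smooth solution of
`2 H₂ + (x-y) ∂_x H₂ = ∂_x² H₁ + u₀ H₁`), the `j`-th partial derivative of `H₂` in `x` on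
the diagonal equals
`u₀^{(j+2)}(x)/((j+2)(j+3)) + (1/(j+2)) Σ_{ℓ=0}^{j} (1/(ℓ+1)) C(j,ℓ) u₀^{(ℓ)}(x) u₀^{(j-ℓ)}(x)`;
in particular `H₂(x,x) = (u₀''(x) + 3 u₀(x)²)/6`. -/
theorem stmt_9 (u₀ : ℝ → ℝ) (hu₀ : ContDiff ℝ (⊤ : ℕ∞) u₀)
    (H₁ H₂ : ℝ → ℝ → ℝ)
    (hH₁ : ∀ x y : ℝ, H₁ x y = ∫ u in (0:ℝ)..1, u₀ (y + u * (x - y)))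
    (hH₂ : ∀ x y : ℝ, H₂ x y = ∫ u in (0:ℝ)..1, u *
      (iteratedDeriv 2 (fun x' => H₁ x' y) (y + u * (x - y)) +
        u₀ (y + u * (x - y)) * H₁ (y + u * (x - y)) y)) :
    (∀ (j : ℕ) (x : ℝ),
      iteratedDeriv j (fun x' => H₂ x' x) x =
        iteratedDeriv (j + 2) u₀ x / (((j : ℝ) + 2) * ((j : ℝ) + 3)) +
          (1 / ((j : ℝ) + 2)) * ∑ ℓ ∈ Finset.range (j + 1),
            (1 / ((ℓ : ℝ) + 1)) * (j.choose ℓ : ℝ) *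
              iteratedDeriv ℓ u₀ x * iteratedDeriv (j - ℓ) u₀ x) ∧
    (∀ x : ℝ, H₂ x x = (iteratedDeriv 2 u₀ x + 3 * u₀ x ^ 2) / 6) := by
  have hH₁_eq (y : ℝ) : (fun x => H₁ x y) = segmentMoment u₀ 0 y := by
    ext x; simp [hH₁, segmentMoment]
  have hH₂_eq (y : ℝ) : (fun x => H₂ x y) = secondHadamardCoeff u₀ y := by
    ext x; simp [hH₂, secondHadamardCoeff, segmentMoment, ← hH₁_eq]
  have hderiv (j : ℕ) (x : ℝ) := hH₂_eq x ▸ iteratedDeriv_secondHadamardCoeff_self hu₀ j x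
  refine ⟨fun j x => ?_, fun x => ?_⟩
  · rw [hderiv, sum_range_choose_mul_div_reflect]
    field_simp
  · have diagonal := hderiv 0 x
    rw [iteratedDeriv_zero] at diagonal
    rw [diagonal]
    norm_num
    ring
end

section
/- Let u₀, u₁ : ℝ → ℝ be infinitely differentiable. Define H₁¹(x, y) = ∫_0^1 u₁(y + u(x − y)) du (the unique smooth solution of H(x,y) + (x−y) ∂_x H(x,y) = u₁(x)), and define H₁⁰(x, y) = ∫_0^1 F₀(y + u(x − y), y) du where F₀(x, y) = u₀(x) − (x − y) ∂_x² H₁¹(x,y) − ∂_x H₁¹(x,y) − (x − y) u₁(x) H₁¹(x,y)/3 (so H₁⁰ is the unique smooth solution of H + (x−y) ∂_x H = F₀). Then for every x ∈ ℝ: (a) the j-th partial derivative of H₁¹ with respect to x at y = x equals u₁^{(j)}(x)/(j+1) for every nonnegative integer j; (b) H₁⁰(x, x) = u₀(x) − u₁'(x)/2; and (c) the partial derivative of H₁⁰ with respect to x at y = x equals u₀'(x)/2 − u₁''(x)/3 − u₁(x)²/6. -/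
/-!
`H₁¹` and `H₁⁰` are weighted averages `∫₀¹ uᵏ f(y + u(x - y)) du` of a function along the segment
from `y` to `x`. Differentiating under the integral sign, `∂ₓʲ` of such an average is the average
of `f⁽ʲ⁾` with weight `uᵏ⁺ʲ`, and on the diagonal `x = y` the average collapses to `f(y)/(k+1)`.
Everything then follows by applying this to `u₁` and to `F₀`; in `∂ₓF₀` on the diagonal the terms
with a factor `x - y` only contribute their cofactor.
-/

open Set
open scoped ContDiff

/-- The solution `x ↦ H(x, y)` of the transport equation `(k + 1) H + (x - y) ∂ₓH = f`. -/
noncomputable def transportIntegral (k : ℕ) (f : ℝ → ℝ) (y x : ℝ) : ℝ :=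
  ∫ u in (0:ℝ)..1, u ^ k * f (y + u * (x - y))

theorem transportIntegral_self (k : ℕ) (f : ℝ → ℝ) (y : ℝ) :
    transportIntegral k f y y = f y / (k + 1) := by
  simp only [transportIntegral, sub_self, mul_zero, add_zero, intervalIntegral.integral_mul_const,
    integral_pow]
  field_simp
  simp

theorem hasDerivAt_transportIntegral {f : ℝ → ℝ} (hf : ContDiff ℝ 1 f) (k : ℕ) (y x : ℝ) :
    HasDerivAt (transportIntegral k f y) (transportIntegral (k + 1) (deriv f) y x) x := by
  obtain ⟨M, hM⟩ := (isCompact_Icc.prod (isCompact_closedBall x 1)).exists_bound_of_continuousOn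
    (f := fun p : ℝ × ℝ => p.1 ^ (k + 1) * deriv f (y + p.1 * (p.2 - y)))
    (by fun_prop : Continuous _).continuousOn
  refine (intervalIntegral.hasDerivAt_integral_of_dominated_loc_of_deriv_le
    (F' := fun x' u => u ^ (k + 1) * deriv f (y + u * (x' - y))) (bound := fun _ => M)
    (Metric.ball_mem_nhds x one_pos) ?_ ?_ ?_ ?_ intervalIntegrable_const ?_).2
  · exact .of_forall fun x' => (by fun_prop : Continuous _).aestronglyMeasurable
  · exact (by fun_prop : Continuous _).intervalIntegrable 0 1
  · exact (by fun_prop : Continuous _).aestronglyMeasurable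
  · refine .of_forall fun u hu x' hx' => hM (u, x') ⟨?_, Metric.ball_subset_closedBall hx'⟩
    rw [uIoc_of_le zero_le_one] at hu
    exact Ioc_subset_Icc_self hu
  · refine .of_forall fun u _ x' _ => ?_
    have hinner : HasDerivAt (fun x' => y + u * (x' - y)) u x' := by
      simpa using ((hasDerivAt_id x').sub_const y |>.const_mul u).const_add y
    exact ((((hf.differentiable one_ne_zero) _).hasDerivAt.comp x' hinner).const_mul
      (u ^ k)).congr_deriv (by ring)

theorem deriv_transportIntegral {f : ℝ → ℝ} (hf : ContDiff ℝ 1 f) (k : ℕ) (y : ℝ) :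
    deriv (transportIntegral k f y) = transportIntegral (k + 1) (deriv f) y :=
  funext fun x => (hasDerivAt_transportIntegral hf k y x).deriv

theorem iteratedDeriv_transportIntegral {f : ℝ → ℝ} (j : ℕ) (hf : ContDiff ℝ j f) (k : ℕ)
    (y : ℝ) :
    iteratedDeriv j (transportIntegral k f y) =
      transportIntegral (k + j) (iteratedDeriv j f) y := by
  induction j generalizing k f with
  | zero => simp
  | succ j ih =>
    rw [Nat.cast_add_one] at hf
    rw [iteratedDeriv_succ', deriv_transportIntegral hf.one_of_succ,
      ih (contDiff_succ_iff_deriv.1 hf).2.2, iteratedDeriv_succ', add_right_comm, add_assoc]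

theorem iteratedDeriv_transportIntegral_self {f : ℝ → ℝ} (j : ℕ) (hf : ContDiff ℝ j f) (k : ℕ)
    (y : ℝ) : iteratedDeriv j (transportIntegral k f y) y = iteratedDeriv j f y / (k + j + 1) := by
  rw [iteratedDeriv_transportIntegral j hf, transportIntegral_self]
  push_cast
  rfl

theorem hasDerivAt_transportIntegral_self {f : ℝ → ℝ} (hf : ContDiff ℝ 1 f) (k : ℕ) (y : ℝ) :
    HasDerivAt (transportIntegral k f y) (deriv f y / (k + 2)) y := by
  convert hasDerivAt_transportIntegral hf k y y using 1
  rw [transportIntegral_self]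
  push_cast
  ring

theorem ContDiff.iteratedDeriv_infty {f : ℝ → ℝ} (hf : ContDiff ℝ ∞ f) (j : ℕ) :
    ContDiff ℝ ∞ (iteratedDeriv j f) :=
  iteratedDeriv_eq_iterate (f := f) ▸ hf.iterate_deriv j

theorem contDiff_transportIntegral {f : ℝ → ℝ} (hf : ContDiff ℝ ∞ f) (k : ℕ) (y : ℝ) :
    ContDiff ℝ ∞ (transportIntegral k f y) :=
  contDiff_of_differentiable_iteratedDeriv fun m _ => by
    rw [iteratedDeriv_transportIntegral m (contDiff_infty.1 hf m)]
    exact fun x => (hasDerivAt_transportIntegral (contDiff_infty.1 (hf.iteratedDeriv_infty m) 1)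
      _ y x).differentiableAt

theorem hasDerivAt_sub_mul_self {g : ℝ → ℝ} {x : ℝ} (hg : DifferentiableAt ℝ g x) :
    HasDerivAt (fun t => (t - x) * g t) (g x) x :=
  (((hasDerivAt_id x).sub_const x).mul hg.hasDerivAt).congr_deriv (by simp)

/-- The source term `F₀(·, y)`, with `H₁¹(·, y) = transportIntegral 0 u₁ y` and its derivatives
written out as transport integrals. -/
noncomputable def h10Source (u₀ u₁ : ℝ → ℝ) (y x : ℝ) : ℝ :=
  u₀ x - (x - y) * (transportIntegral 2 (iteratedDeriv 2 u₁) y x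
    + u₁ x * transportIntegral 0 u₁ y x / 3) - transportIntegral 1 (deriv u₁) y x

theorem h10Source_self (u₀ u₁ : ℝ → ℝ) (y : ℝ) :
    h10Source u₀ u₁ y y = u₀ y - deriv u₁ y / 2 := by
  norm_num [h10Source, transportIntegral_self]

theorem contDiff_h10Source {u₀ u₁ : ℝ → ℝ} (hu₀ : ContDiff ℝ ∞ u₀) (hu₁ : ContDiff ℝ ∞ u₁)
    (y : ℝ) : ContDiff ℝ ∞ (h10Source u₀ u₁ y) := by
  have := contDiff_transportIntegral hu₁ 0 y
  have := contDiff_transportIntegral (contDiff_infty_iff_deriv.1 hu₁).2 1 y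
  have := contDiff_transportIntegral (hu₁.iteratedDeriv_infty 2) 2 y
  unfold h10Source
  fun_prop

theorem hasDerivAt_h10Source_self {u₀ u₁ : ℝ → ℝ} {y : ℝ} (hu₀ : DifferentiableAt ℝ u₀ y)
    (hu₁ : ContDiff ℝ 3 u₁) :
    HasDerivAt (h10Source u₀ u₁ y)
      (deriv u₀ y - 2 * iteratedDeriv 2 u₁ y / 3 - u₁ y ^ 2 / 3) y := by
  have h0 : ContDiff ℝ 1 u₁ := hu₁.of_le (by norm_num)
  have h1 : ContDiff ℝ 1 (deriv u₁) := (hu₁.of_le (by norm_num)).iterate_deriv' 1 1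
  have h2 : ContDiff ℝ 1 (iteratedDeriv 2 u₁) :=
    iteratedDeriv_eq_iterate (f := u₁) ▸ hu₁.iterate_deriv' 1 2
  have hcofactor : DifferentiableAt ℝ (fun x => transportIntegral 2 (iteratedDeriv 2 u₁) y x
      + u₁ x * transportIntegral 0 u₁ y x / 3) y :=
    (hasDerivAt_transportIntegral h2 2 y y).differentiableAt.add
      (((h0.differentiable one_ne_zero y).mul
        (hasDerivAt_transportIntegral h0 0 y y).differentiableAt).div_const 3)
  refine ((hu₀.hasDerivAt.sub (hasDerivAt_sub_mul_self hcofactor)).sub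
    (hasDerivAt_transportIntegral_self h1 1 y)).congr_deriv ?_
  simp only [transportIntegral_self, iteratedDeriv_succ, iteratedDeriv_zero]
  push_cast
  ring

/-- For smooth `u₀, u₁`, with `H₁¹(x,y) = ∫_0^1 u₁(y + u(x-y)) du` (unique smooth solution
of `H + (x-y) ∂_x H = u₁(x)`), and `H₁⁰(x,y) = ∫_0^1 F₀(y + u(x-y), y) du` where
`F₀(x,y) = u₀(x) - (x-y) ∂_x² H₁¹(x,y) - ∂_x H₁¹(x,y) - (x-y) u₁(x) H₁¹(x,y)/3`
(unique smooth solution of `H + (x-y) ∂_x H = F₀`), one has: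
(a) `∂_x^j H₁¹` on the diagonal equals `u₁^{(j)}(x)/(j+1)`;
(b) `H₁⁰(x,x) = u₀(x) - u₁'(x)/2`;
(c) `∂_x H₁⁰` on the diagonal equals `u₀'(x)/2 - u₁''(x)/3 - u₁(x)²/6`. -/
theorem stmt_10 (u₀ u₁ : ℝ → ℝ)
    (hu₀ : ContDiff ℝ (⊤ : ℕ∞) u₀) (hu₁ : ContDiff ℝ (⊤ : ℕ∞) u₁)
    (H11 H10 F₀ : ℝ → ℝ → ℝ)
    (hH11 : ∀ x y : ℝ, H11 x y = ∫ u in (0:ℝ)..1, u₁ (y + u * (x - y)))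
    (hF₀ : ∀ x y : ℝ, F₀ x y = u₀ x - (x - y) * iteratedDeriv 2 (fun x' => H11 x' y) x -
      deriv (fun x' => H11 x' y) x - (x - y) * u₁ x * H11 x y / 3)
    (hH10 : ∀ x y : ℝ, H10 x y = ∫ u in (0:ℝ)..1, F₀ (y + u * (x - y)) y) :
    (∀ (j : ℕ) (x : ℝ),
      iteratedDeriv j (fun x' => H11 x' x) x = iteratedDeriv j u₁ x / ((j : ℝ) + 1)) ∧
    (∀ x : ℝ, H10 x x = u₀ x - deriv u₁ x / 2) ∧
    (∀ x : ℝ, deriv (fun x' => H10 x' x) x =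
      deriv u₀ x / 2 - iteratedDeriv 2 u₁ x / 3 - u₁ x ^ 2 / 6) := by
  have hH11' (y : ℝ) : (fun x' => H11 x' y) = transportIntegral 0 u₁ y :=
    funext fun x' => by simp [hH11, transportIntegral]
  have hF₀' (y : ℝ) : (fun x' => F₀ x' y) = h10Source u₀ u₁ y := funext fun x' => by
    rw [hF₀, congrFun (hH11' y) x', hH11',
      iteratedDeriv_transportIntegral 2 (contDiff_infty.1 hu₁ 2),
      deriv_transportIntegral (contDiff_infty.1 hu₁ 1), h10Source]
    ring
  have hH10' (y : ℝ) : (fun x' => H10 x' y) = transportIntegral 0 (h10Source u₀ u₁ y) y :=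
    funext fun x' => by simp [hH10, ← hF₀', transportIntegral]
  refine ⟨fun j x => ?_, fun x => ?_, fun x => ?_⟩
  · rw [hH11', iteratedDeriv_transportIntegral_self j (contDiff_infty.1 hu₁ j)]
    simp
  · rw [congrFun (hH10' x) x, transportIntegral_self, h10Source_self]
    simp
  · have hF₀_smooth := contDiff_infty.1 (contDiff_h10Source hu₀ hu₁ x) 1
    rw [hH10', (hasDerivAt_transportIntegral_self hF₀_smooth 0 x).deriv,
      (hasDerivAt_h10Source_self (hu₀.differentiable (by simp) x) (contDiff_infty.1 hu₁ 3)).deriv]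
    push_cast
    ring
end

section
/- Let u₀ : ℝ → ℝ be infinitely differentiable. Define a sequence of smooth functions H_k : ℝ² → ℝ by H₀ = 1 and H_{k+1}(x, y) = ∫_0^1 u^k · (∂_x² H_k + u₀ · H_k)(y + u(x − y), y) du, so that H_{k+1} is the unique smooth solution of (k+1) H_{k+1}(x,y) + (x−y) ∂_x H_{k+1}(x,y) = ∂_x² H_k(x,y) + u₀(x) H_k(x,y). Then H_k(x, y) = H_k(y, x) for every k and all x, y ∈ ℝ. -/
/-!
Write `X = x - y`, `L₁ = ∂ₓ² + u₀(x)` and `L₂ = ∂_y² + u₀(y)`. The recursion says that `H_{k+1}`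
solves the transport equation `(k + 1 + X ∂ₓ) H_{k+1} = L₁ H_k`. By induction on `k`, `H_{k+1}`
also solves the mirror equation `(k + 1 - X ∂_y) H_{k+1} = L₂ H_k`: the residual `R_{k+1}` of the
mirror equation satisfies `(k + X ∂ₓ) R_{k+1} = L₁ R_k`, which is an identity between commuting
derivations of the algebra of smooth functions on `ℝ²` resting on `L₁ L₂ = L₂ L₁`, and a smooth
solution of `(n + X ∂ₓ) f = 0` vanishing on the diagonal is zero. Swapping the variables turns the
mirror equation into the original one, so by the same uniqueness, and the symmetry of `H_k`,
`H_{k+1}(y, x) = H_{k+1}(x, y)`.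
-/

open scoped ContDiff
open Function intervalIntegral Set

section ParametricIntegral

universe u

-- `P` and `E` share a universe so that the induction below can pass to `P →L[ℝ] E`.
variable {P E : Type u} [NormedAddCommGroup P] [NormedSpace ℝ P] [ProperSpace P]
  [NormedAddCommGroup E] [NormedSpace ℝ E]

theorem hasFDerivAt_parametric_intervalIntegral {F : P → ℝ → E}
    (hF : ContDiff ℝ 1 (uncurry F)) (a b : ℝ) (p₀ : P) :
    HasFDerivAt (fun p => ∫ t in a..b, F p t)
      (∫ t in a..b, fderiv ℝ (uncurry F) (p₀, t) ∘L .inl ℝ P ℝ) p₀ := by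
  set F' : P → ℝ → P →L[ℝ] E := fun p t => fderiv ℝ (uncurry F) (p, t) ∘L .inl ℝ P ℝ
  have hF'c : Continuous (uncurry F') :=
    ((ContinuousLinearMap.compL ℝ P (P × ℝ) E).flip (.inl ℝ P ℝ)).continuous.comp
      (hF.continuous_fderiv one_ne_zero)
  obtain ⟨C, hC⟩ := ((isCompact_closedBall p₀ 1).prod isCompact_uIcc).exists_bound_of_continuousOn
    hF'c.continuousOn
  have hFc : Continuous (uncurry F) := hF.continuous
  refine hasFDerivAt_integral_of_dominated_of_fderiv_le (bound := fun _ => C)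
    (Metric.closedBall_mem_nhds p₀ one_pos) (.of_forall fun p => ?_) ?_ ?_
    (.of_forall fun t ht p hp => hC (p, t) ⟨hp, uIoc_subset_uIcc ht⟩) intervalIntegrable_const
    (.of_forall fun t _ p _ => ?_)
  · exact (hFc.comp (Continuous.prodMk_right p)).aestronglyMeasurable
  · exact (hFc.comp (Continuous.prodMk_right p₀)).intervalIntegrable a b
  · exact (hF'c.comp (Continuous.prodMk_right p₀)).aestronglyMeasurable
  · exact (hF.differentiable one_ne_zero (p, t)).hasFDerivAt.comp p
      (hasFDerivAt_prodMk_left (𝕜 := ℝ) p t)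

theorem contDiff_parametric_intervalIntegral {n : ℕ} {F : P → ℝ → E}
    (hF : ContDiff ℝ n (uncurry F)) (a b : ℝ) :
    ContDiff ℝ n (fun p => ∫ t in a..b, F p t) := by
  induction n generalizing E with
  | zero =>
    rw [Nat.cast_zero, contDiff_zero] at hF ⊢
    exact continuous_parametric_intervalIntegral_of_continuous' hF a b
  | succ n ih =>
    have hderiv := hasFDerivAt_parametric_intervalIntegral
      (hF.of_le (by exact_mod_cast le_add_self)) a b
    rw [Nat.cast_succ, contDiff_succ_iff_fderiv] at hF ⊢
    refine ⟨fun p => (hderiv p).differentiableAt, by simp, ?_⟩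
    rw [funext fun p => (hderiv p).fderiv]
    exact ih (((ContinuousLinearMap.compL ℝ P (P × ℝ) E).flip (.inl ℝ P ℝ)).contDiff.comp hF.2.2)

theorem ContDiff.parametric_intervalIntegral {F : P → ℝ → E}
    (hF : ContDiff ℝ ∞ (uncurry F)) (a b : ℝ) :
    ContDiff ℝ ∞ (fun p => ∫ t in a..b, F p t) :=
  contDiff_infty.2 fun n => contDiff_parametric_intervalIntegral (contDiff_infty.1 hF n) a b

end ParametricIntegral

section SmoothFunctions

variable {E F : Type*} [NormedAddCommGroup E] [NormedSpace ℝ E] [NormedAddCommGroup F]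
  [NormedSpace ℝ F]

variable (E) in
def smoothFunctions : Subalgebra ℝ (E → ℝ) where
  carrier := {f | ContDiff ℝ ∞ f}
  mul_mem' {f g} (hf : ContDiff ℝ ∞ f) (hg : ContDiff ℝ ∞ g) := hf.mul hg
  add_mem' {f g} (hf : ContDiff ℝ ∞ f) (hg : ContDiff ℝ ∞ g) := hf.add hg
  algebraMap_mem' _ := (contDiff_const : ContDiff ℝ ∞ _)

namespace smoothFunctions

theorem mem_iff {f : E → ℝ} : f ∈ smoothFunctions E ↔ ContDiff ℝ ∞ f := Iff.rfl

instance : CoeFun (smoothFunctions E) (fun _ => E → ℝ) := ⟨Subtype.val⟩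

theorem contDiff_coe (f : smoothFunctions E) : ContDiff ℝ ∞ f := f.2

theorem differentiable_coe (f : smoothFunctions E) : Differentiable ℝ f :=
  (contDiff_coe f).differentiable (by simp)

noncomputable def dirDeriv (v : E) : Derivation ℝ (smoothFunctions E) (smoothFunctions E) :=
  Derivation.mk'
    { toFun := fun f => ⟨fun p => fderiv ℝ f p v,
        ((contDiff_coe f).fderiv_right (m := ∞) le_rfl).clm_apply contDiff_const⟩
      map_add' := fun f g => by
        ext p
        simp [fderiv_add (differentiable_coe f p) (differentiable_coe g p)]
      map_smul' := fun c f => by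
        ext p
        simp [fderiv_const_smul (differentiable_coe f p)] }
    fun f g => by
      ext p
      simp [fderiv_mul (differentiable_coe f p) (differentiable_coe g p)]

@[simp]
theorem dirDeriv_apply (v : E) (f : smoothFunctions E) (p : E) :
    dirDeriv v f p = fderiv ℝ f p v := rfl

theorem dirDeriv_comm (v w : E) (f : smoothFunctions E) :
    dirDeriv v (dirDeriv w f) = dirDeriv w (dirDeriv v f) := by
  ext p
  have hf' : Differentiable ℝ (fderiv ℝ f) :=
    ((contDiff_coe f).fderiv_right (m := 1) (WithTop.coe_le_coe.2 le_top)).differentiable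
      one_ne_zero
  have hsecond (v w : E) : dirDeriv v (dirDeriv w f) p = fderiv ℝ (fderiv ℝ f) p v w := by
    change fderiv ℝ (fun q => fderiv ℝ f q w) p v = _
    simp [fderiv_clm_apply (hf' p) (differentiableAt_const w)]
  rw [hsecond, hsecond]
  exact (contDiff_coe f).contDiffAt.isSymmSndFDerivAt
    (by simp only [minSmoothness_of_isRCLikeNormedField]; exact WithTop.coe_le_coe.2 le_top) v w

theorem dirDeriv_zero : dirDeriv (0 : E) = 0 := by
  ext f p
  simp

def compCLM (L : E →L[ℝ] F) : smoothFunctions F →ₐ[ℝ] smoothFunctions E where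
  toFun f := ⟨f ∘ L, (contDiff_coe f).comp L.contDiff⟩
  map_one' := rfl
  map_mul' _ _ := rfl
  map_zero' := rfl
  map_add' _ _ := rfl
  commutes' _ := rfl

@[simp]
theorem compCLM_apply (L : E →L[ℝ] F) (f : smoothFunctions F) (p : E) :
    compCLM L f p = f (L p) := rfl

theorem dirDeriv_compCLM (L : E →L[ℝ] F) (v : E) (f : smoothFunctions F) :
    dirDeriv v (compCLM L f) = compCLM L (dirDeriv (L v) f) := by
  ext p
  change fderiv ℝ (f ∘ L) p v = _
  simp [fderiv_comp p (differentiable_coe f (L p)) L.differentiableAt]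

end smoothFunctions

end SmoothFunctions

section TransportEquation

variable {R A B : Type*} [CommRing R] [CommRing A] [Algebra R A] [CommRing B] [Algebra R B]

def schrodinger (D : Derivation R A A) (U f : A) : A := D (D f) + U * f

/-- With `D = ∂ₓ`, `X = x - y`, `U = u₀(x)` this is the residual of the recursion
`(n + (x - y) ∂ₓ) H_n = ∂ₓ² H_{n-1} + u₀(x) H_{n-1}` for `f = H_{n-1}`, `g = H_n`; with
`D = ∂_y`, `X = y - x`, `U = u₀(y)` it is the residual of the mirror recursion in `y`. -/
def transportResidual (D : Derivation R A A) (X U : A) (n : ℕ) (f g : A) : A :=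
  n * g + X * D g - schrodinger D U f

theorem transportResidual_sub (D : Derivation R A A) (X U : A) (n : ℕ) (f g g' : A) :
    transportResidual D X U n f g - transportResidual D X U n f g' =
      n * (g - g') + X * D (g - g') := by
  simp only [transportResidual, map_sub]
  ring

@[simp]
theorem transportResidual_zero_left (D : Derivation R A A) (X U : A) (n : ℕ) (g : A) :
    transportResidual D X U n 0 g = n * g + X * D g := by
  simp [transportResidual, schrodinger]

theorem AlgHom.map_transportResidual (φ : A →ₐ[R] B) {D : Derivation R A A}
    {D' : Derivation R B B} (hφ : ∀ f, φ (D f) = D' (φ f)) (X U : A) (n : ℕ) (f g : A) :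
    φ (transportResidual D X U n f g) = transportResidual D' (φ X) (φ U) n (φ f) (φ g) := by
  simp [transportResidual, schrodinger, hφ]

-- The cancellation behind this identity is `[D₁² + U₁, D₂² + U₂] = 0`.
theorem transportResidual_propagate {D₁ D₂ : Derivation R A A} {X U₁ U₂ : A}
    (hcomm : ∀ f, D₂ (D₁ f) = D₁ (D₂ f)) (hX₁ : D₁ X = 1) (hX₂ : D₂ X = -1)
    (hU₁ : D₂ U₁ = 0) (hU₂ : D₁ U₂ = 0) {n : ℕ} {a b c : A}
    (hab : transportResidual D₁ X U₁ n a b = 0)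
    (hbc : transportResidual D₁ X U₁ (n + 1) b c = 0) :
    transportResidual D₁ X U₁ n (transportResidual D₂ (-X) U₂ n a b)
      (transportResidual D₂ (-X) U₂ (n + 1) b c) = 0 := by
  have hN := congrArg (fun f => n * f + X * D₁ f) hbc
  have hT := congrArg (fun f => D₁ f + D₂ f) hbc
  have hL := congrArg (schrodinger D₂ U₂) hab
  simp only [transportResidual, schrodinger, map_add, map_sub, map_neg, map_zero,
    Derivation.leibniz, Derivation.map_natCast, Derivation.map_one_eq_zero, smul_eq_mul,
    hcomm, hX₁, hX₂, hU₁, hU₂, Nat.cast_add, Nat.cast_one] at hN hT hL ⊢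
  linear_combination hN - X * hT - hL

end TransportEquation

section Plane

local notation "S" => smoothFunctions (ℝ × ℝ)
local notation "∂₁" => smoothFunctions.dirDeriv ((1, 0) : ℝ × ℝ)
local notation "∂₂" => smoothFunctions.dirDeriv ((0, 1) : ℝ × ℝ)

namespace smoothFunctions

def fstSubSnd : S := ⟨fun p => p.1 - p.2, mem_iff.2 (contDiff_fst.sub contDiff_snd)⟩

@[simp]
theorem fstSubSnd_apply (p : ℝ × ℝ) : fstSubSnd p = p.1 - p.2 := rfl

theorem dirDeriv_fst_fstSubSnd : ∂₁ fstSubSnd = 1 := by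
  ext p
  change fderiv ℝ (fun p : ℝ × ℝ => p.1 - p.2) p (1, 0) = 1
  rw [(hasFDerivAt_fst.fun_sub hasFDerivAt_snd).fderiv]
  simp

theorem dirDeriv_snd_fstSubSnd : ∂₂ fstSubSnd = -1 := by
  ext p
  change fderiv ℝ (fun p : ℝ × ℝ => p.1 - p.2) p (0, 1) = -1
  rw [(hasFDerivAt_fst.fun_sub hasFDerivAt_snd).fderiv]
  simp

theorem dirDeriv_snd_compCLM_fst (u : smoothFunctions ℝ) :
    ∂₂ (compCLM (ContinuousLinearMap.fst ℝ ℝ ℝ) u) = 0 := by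
  simp [dirDeriv_compCLM, dirDeriv_zero]

theorem dirDeriv_fst_compCLM_snd (u : smoothFunctions ℝ) :
    ∂₁ (compCLM (ContinuousLinearMap.snd ℝ ℝ ℝ) u) = 0 := by
  simp [dirDeriv_compCLM, dirDeriv_zero]

theorem compCLM_prodComm_dirDeriv_snd (f : S) :
    compCLM (ContinuousLinearEquiv.prodComm ℝ ℝ ℝ : ℝ × ℝ →L[ℝ] ℝ × ℝ) (∂₂ f) =
      ∂₁ (compCLM (ContinuousLinearEquiv.prodComm ℝ ℝ ℝ : ℝ × ℝ →L[ℝ] ℝ × ℝ) f) := by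
  rw [dirDeriv_compCLM]
  simp

theorem hasDerivAt_slice (f : S) (x y : ℝ) : HasDerivAt (fun x => f (x, y)) (∂₁ f (x, y)) x :=
  (differentiable_coe f (x, y)).hasFDerivAt.comp_hasDerivAt x
    ((hasDerivAt_id x).prodMk (hasDerivAt_const x y))

theorem iteratedDeriv_two_slice (f : S) (x y : ℝ) :
    iteratedDeriv 2 (fun x => f (x, y)) x = ∂₁ (∂₁ f) (x, y) := by
  rw [iteratedDeriv_succ, iteratedDeriv_one, funext fun x => (hasDerivAt_slice f x y).deriv]
  exact (hasDerivAt_slice _ x y).deriv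

theorem hasDerivAt_ray (f : S) (x y t : ℝ) :
    HasDerivAt (fun t => f (y + t * (x - y), y)) (∂₁ f (y + t * (x - y), y) * (x - y)) t :=
  (hasDerivAt_slice f _ y).comp t <| by
    simpa using ((hasDerivAt_id t).mul_const (x - y)).const_add y

-- `t ↦ tⁿ f(y + t(x - y), y)` has derivative `t⁻¹ tⁿ (n f + X ∂₁ f)(y + t(x - y), y) = 0`
-- for `t ≠ 0`, so its values at `0` and `1` agree.
theorem eq_zero_of_euler {n : ℕ} {f : S} (hf : (n : S) * f + fstSubSnd * ∂₁ f = 0)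
    (hdiag : ∀ y, f (y, y) = 0) : f = 0 := by
  ext ⟨x, y⟩
  let g : ℝ → ℝ := fun t => t ^ n * f (y + t * (x - y), y)
  have hg (t : ℝ) := (hasDerivAt_pow n t).mul (hasDerivAt_ray f x y t)
  obtain ⟨c, hc, hslope⟩ := exists_hasDerivAt_eq_slope g _ zero_lt_one
    (fun t _ => (hg t).continuousAt.continuousWithinAt) (fun t _ => hg t)
  have hfc := congrArg (fun h : S => h (y + c * (x - y), y)) hf
  have hpow : c * ((n : ℝ) * c ^ (n - 1)) = n * c ^ n := by
    rcases n with _ | n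
    · simp
    · rw [add_tsub_cancel_right]
      ring
  simp only [g, one_pow, one_mul, add_sub_cancel, zero_mul, add_zero, hdiag, mul_zero, sub_zero,
    div_one] at hslope
  simp only [AddMemClass.coe_add, MulMemClass.coe_mul, SubringClass.coe_natCast, Pi.add_apply,
    Pi.mul_apply, Pi.natCast_apply, fstSubSnd_apply, add_sub_cancel_left, ZeroMemClass.coe_zero,
    Pi.zero_apply] at hfc
  have hcf : c * f (x, y) = 0 := by
    rw [← hslope]
    linear_combination c ^ n * hfc + f (y + c * (x - y), y) * hpow
  simpa [hc.1.ne'] using hcf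

theorem eq_zero_of_euler_of_ne_zero {n : ℕ} (hn : n ≠ 0) {f : S}
    (hf : (n : S) * f + fstSubSnd * ∂₁ f = 0) : f = 0 :=
  eq_zero_of_euler hf fun y => by simpa [hn] using congrArg (fun g : S => g (y, y)) hf

noncomputable def transport (k : ℕ) (A : S) : S :=
  ⟨fun p => ∫ t in (0 : ℝ)..1, t ^ k * A (p.2 + t * (p.1 - p.2), p.2),
    mem_iff.2 <| ContDiff.parametric_intervalIntegral
      (F := fun (p : ℝ × ℝ) t => t ^ k * A (p.2 + t * (p.1 - p.2), p.2))
      (by have := contDiff_coe A; unfold uncurry; fun_prop) 0 1⟩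

theorem transport_apply (k : ℕ) (A : S) (p : ℝ × ℝ) :
    transport k A p = ∫ t in (0 : ℝ)..1, t ^ k * A (p.2 + t * (p.1 - p.2), p.2) := rfl

theorem pow_mul_transport_ray (k : ℕ) (A : S) (x y s : ℝ) :
    s ^ (k + 1) * transport k A (y + s * (x - y), y) =
      ∫ t in (0 : ℝ)..s, t ^ k * A (y + t * (x - y), y) := by
  rcases eq_or_ne s 0 with rfl | hs
  · simp
  have hsubst := integral_comp_mul_left (a := 0) (b := 1)
    (fun t => t ^ k * A (y + t * (x - y), y)) hs
  simp only [mul_zero, mul_one, smul_eq_mul] at hsubst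
  calc s ^ (k + 1) * transport k A (y + s * (x - y), y)
      = s * ∫ t in (0 : ℝ)..1, (s * t) ^ k * A (y + s * t * (x - y), y) := by
        rw [transport_apply, ← integral_const_mul, ← integral_const_mul]
        refine integral_congr fun t _ => ?_
        simp only [add_sub_cancel_left]
        rw [show t * (s * (x - y)) = s * t * (x - y) by ring]
        ring
    _ = _ := by rw [hsubst, mul_inv_cancel_left₀ hs]

theorem transport_spec (k : ℕ) (A : S) :
    ((k + 1 : ℕ) : S) * transport k A + fstSubSnd * ∂₁ (transport k A) = A := by
  ext ⟨x, y⟩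
  have hA : Continuous fun t => t ^ k * A (y + t * (x - y), y) := by
    have := (contDiff_coe A).continuous
    fun_prop
  have hL : HasDerivAt (fun s => s ^ (k + 1) * transport k A (y + s * (x - y), y)) _ 1 :=
    (hasDerivAt_pow (k + 1) 1).mul (hasDerivAt_ray (transport k A) x y 1)
  rw [funext (pow_mul_transport_ray k A x y)] at hL
  have h := hL.unique (integral_hasDerivAt_right (hA.intervalIntegrable 0 1)
    (hA.stronglyMeasurableAtFilter _ _) hA.continuousAt)
  simp only [Nat.cast_add, Nat.cast_one, add_tsub_cancel_right, one_pow, mul_one, one_mul,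
    add_sub_cancel] at h
  simp only [Nat.cast_add, Nat.cast_one, AddMemClass.coe_add, MulMemClass.coe_mul,
    SubringClass.coe_natCast, OneMemClass.coe_one, Pi.add_apply, Pi.mul_apply, Pi.natCast_apply,
    Pi.one_apply, fstSubSnd_apply]
  linear_combination h

end smoothFunctions

open smoothFunctions

variable (u : smoothFunctions ℝ)

local notation "U₁" => compCLM (ContinuousLinearMap.fst ℝ ℝ ℝ) u
local notation "U₂" => compCLM (ContinuousLinearMap.snd ℝ ℝ ℝ) u
local notation "σ" => compCLM (ContinuousLinearEquiv.prodComm ℝ ℝ ℝ : ℝ × ℝ →L[ℝ] ℝ × ℝ)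

noncomputable def hadamardCoeff : ℕ → S
  | 0 => 1
  | k + 1 => transport k (schrodinger ∂₁ U₁ (hadamardCoeff k))

@[simp]
theorem hadamardCoeff_zero : hadamardCoeff u 0 = 1 := rfl

theorem transportResidual_hadamardCoeff (k : ℕ) :
    transportResidual ∂₁ fstSubSnd U₁ (k + 1) (hadamardCoeff u k) (hadamardCoeff u (k + 1)) =
      0 := by
  rw [transportResidual, hadamardCoeff, transport_spec, sub_self]

theorem transportResidual_snd_hadamardCoeff (k : ℕ) :
    transportResidual ∂₂ (-fstSubSnd) U₂ (k + 1) (hadamardCoeff u k) (hadamardCoeff u (k + 1)) =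
      0 := by
  have hprop {n : ℕ} {a b c : S} := transportResidual_propagate (n := n) (a := a) (b := b)
    (c := c) (D₁ := ∂₁) (D₂ := ∂₂) (dirDeriv_comm (0, 1) (1, 0)) dirDeriv_fst_fstSubSnd
    dirDeriv_snd_fstSubSnd (dirDeriv_snd_compCLM_fst u) (dirDeriv_fst_compCLM_snd u)
  induction k with
  | zero =>
    -- `0` plays the role of `H₋₁`, for which the recursion also holds with `n = 0`.
    have h := hprop (n := 0) (a := 0) (by simp) (transportResidual_hadamardCoeff u 0)
    have h₀ : transportResidual ∂₂ (-fstSubSnd) U₂ 0 0 (hadamardCoeff u 0) = 0 := by simp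
    rw [h₀, transportResidual_zero_left] at h
    refine eq_zero_of_euler h fun y => ?_
    have hdiag := congrArg (fun f : S => f (y, y)) (transportResidual_hadamardCoeff u 0)
    simpa [transportResidual, schrodinger] using hdiag
  | succ k ih =>
    have h := hprop (transportResidual_hadamardCoeff u k)
      (transportResidual_hadamardCoeff u (k + 1))
    rw [ih, transportResidual_zero_left] at h
    exact eq_zero_of_euler_of_ne_zero k.succ_ne_zero h

theorem compCLM_prodComm_hadamardCoeff (k : ℕ) : σ (hadamardCoeff u k) = hadamardCoeff u k := by
  induction k with
  | zero => exact map_one _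
  | succ k ih =>
    have h := congrArg σ (transportResidual_snd_hadamardCoeff u k)
    have hX : σ (-fstSubSnd) = fstSubSnd := by ext; simp
    have hU : σ U₂ = U₁ := by ext; simp
    rw [AlgHom.map_transportResidual σ compCLM_prodComm_dirDeriv_snd, ih, map_zero, hX, hU] at h
    refine sub_eq_zero.1 (eq_zero_of_euler_of_ne_zero k.succ_ne_zero ?_)
    rw [← transportResidual_sub, h, transportResidual_hadamardCoeff, sub_zero]

end Plane

/-- For smooth `u₀`, the Hadamard's coefficients of the Schrödinger operator
`L = ∂_x² + u₀`, defined recursively by `H₀ = 1` and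
`H_{k+1}(x,y) = ∫_0^1 u^k (∂_x² H_k + u₀ H_k)(y + u(x-y), y) du` (the unique smooth
solution of `(k+1) H_{k+1} + (x-y) ∂_x H_{k+1} = ∂_x² H_k + u₀ H_k`), are symmetric:
`H_k(x,y) = H_k(y,x)`. -/
theorem stmt_11 (u₀ : ℝ → ℝ) (hu₀ : ContDiff ℝ (⊤ : ℕ∞) u₀)
    (H : ℕ → ℝ → ℝ → ℝ)
    (hH0 : ∀ x y : ℝ, H 0 x y = 1)
    (hHk : ∀ (k : ℕ) (x y : ℝ), H (k + 1) x y = ∫ u in (0:ℝ)..1, u ^ k *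
      (iteratedDeriv 2 (fun x' => H k x' y) (y + u * (x - y)) +
        u₀ (y + u * (x - y)) * H k (y + u * (x - y)) y)) :
    ∀ (k : ℕ) (x y : ℝ), H k x y = H k y x := by
  let u : smoothFunctions ℝ := ⟨u₀, smoothFunctions.mem_iff.2 hu₀⟩
  have hH (k : ℕ) (x y : ℝ) : H k x y = hadamardCoeff u k (x, y) := by
    induction k generalizing x y with
    | zero => simp [hH0]
    | succ k ih =>
      rw [hHk, hadamardCoeff, smoothFunctions.transport_apply]
      refine integral_congr fun t _ => ?_
      simp [ih, schrodinger, smoothFunctions.iteratedDeriv_two_slice, u]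
  intro k x y
  rw [hH, hH, ← congrArg (· (y, x)) (compCLM_prodComm_hadamardCoeff u k)]
  rfl
end

section
/- For all integers n, k with 1 ≤ n ≤ k, the identity Σ_{ℓ=n−1}^{k−1} 2^{ℓ+1} · (−1)^{ℓ−n+1} · ((k−ℓ)_{k−n+ℓ} / ℓ!) · C(ℓ, n−1) = (−1)^{k−n} · 2^n · (n)_{2k−2n} / (k−n)! holds, where (a)_m = a(a+1)⋯(a+m−1) denotes the ascending Pochhammer symbol and C(ℓ, n−1) is the binomial coefficient. -/
/-!
Put `n = m + 1`, `k = m + 1 + d` and `ℓ = m + j` with `0 ≤ j ≤ d`. Since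
`(d - j + 1)_{d + m + j} = (2d + m)! / (d - j)!` and `C(m + j, m) / (m + j)! = 1 / (m! j!)`,
the `ℓ`-th summand is `2^{m+1} (2d + m)!/m!` times `(-2)^j / ((d - j)! j!)`, and the binomial
theorem sums the latter to `(-2 + 1)^d / d!`. Finally `(m + 1)_{2d} = (2d + m)! / m!`.
-/

open Finset Nat

section

variable {K : Type*} [Field K] [CharZero K]

theorem ascPochhammer_eval_natCast_add_one (a b : ℕ) :
    (ascPochhammer K b).eval ((a : K) + 1) = (a + b)! / a ! := by
  rw [eq_div_iff (cast_ne_zero.mpr (factorial_ne_zero a)), mul_comm]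
  exact_mod_cast factorial_mul_ascPochhammer K a b

theorem sum_range_pow_div_factorial_mul_factorial (x : K) (d : ℕ) :
    ∑ j ∈ range (d + 1), x ^ j / ((d - j)! * j !) = (x + 1) ^ d / d ! := by
  rw [add_pow, sum_div]
  refine sum_congr rfl fun j hj => ?_
  have := cast_ne_zero (R := K).mpr (factorial_ne_zero d)
  rw [cast_choose K (Nat.lt_succ_iff.mp (mem_range.mp hj)), one_pow]
  field_simp

theorem two_pow_mul_ascPochhammer_div_factorial_mul_choose (m d j : ℕ) (hj : j ≤ d) :
    (2 : K) ^ (m + j + 1) * (-1) ^ j *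
        ((ascPochhammer K (d + m + j)).eval (((d - j : ℕ) : K) + 1) / (m + j)!) *
        ((m + j).choose m : K) =
      2 ^ (m + 1) * ((2 * d + m)! / m !) * ((-2) ^ j / ((d - j)! * j !)) := by
  rw [ascPochhammer_eval_natCast_add_one, show d - j + (d + m + j) = 2 * d + m by omega,
    cast_choose K (le_add_right m j), add_tsub_cancel_left, neg_pow (2 : K), pow_add, pow_add]
  have := cast_ne_zero (R := K).mpr (factorial_ne_zero (m + j))
  field_simp
  ring

end

/-- For integers `1 ≤ n ≤ k`,
`Σ_{ℓ=n-1}^{k-1} 2^{ℓ+1} (-1)^{ℓ-n+1} ((k-ℓ)_{k-n+ℓ}/ℓ!) C(ℓ, n-1)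
  = (-1)^{k-n} 2^n (n)_{2k-2n} / (k-n)!`,
where `(a)_m` is the ascending Pochhammer symbol. -/
theorem stmt_13 (n k : ℕ) (hn : 1 ≤ n) (hnk : n ≤ k) :
    ∑ ℓ ∈ Finset.Icc (n - 1) (k - 1),
      (2 : ℝ) ^ (ℓ + 1) * (-1 : ℝ) ^ (ℓ + 1 - n) *
          ((ascPochhammer ℝ (k - n + ℓ)).eval ((k : ℝ) - (ℓ : ℝ)) / (Nat.factorial ℓ : ℝ)) *
        (ℓ.choose (n - 1) : ℝ) =
      (-1 : ℝ) ^ (k - n) * 2 ^ n * (ascPochhammer ℝ (2 * k - 2 * n)).eval (n : ℝ) /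
        (Nat.factorial (k - n) : ℝ) := by
  obtain ⟨m, rfl⟩ : ∃ m, n = m + 1 := ⟨n - 1, by omega⟩
  obtain ⟨d, rfl⟩ : ∃ d, k = m + 1 + d := ⟨k - (m + 1), by omega⟩
  have hIcc : Icc (m + 1 - 1) (m + 1 + d - 1) = Ico m (m + (d + 1)) := by
    rw [← Ico_add_one_right_eq_Icc]; congr 1; omega
  rw [hIcc, sum_Ico_eq_sum_range, add_tsub_cancel_left]
  calc _ = ∑ j ∈ range (d + 1),
        2 ^ (m + 1) * ((2 * d + m)! / m ! : ℝ) * ((-2) ^ j / ((d - j)! * j !)) := by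
        refine sum_congr rfl fun j hj => ?_
        have hjd := Nat.lt_succ_iff.mp (mem_range.mp hj)
        have hx : ((m + 1 + d : ℕ) : ℝ) - ((m + j : ℕ) : ℝ) = ((d - j : ℕ) : ℝ) + 1 := by
          push_cast [hjd]; ring
        rw [hx, show m + j + 1 - (m + 1) = j by omega, show m + 1 - 1 = m by omega,
          show m + 1 + d - (m + 1) + (m + j) = d + m + j by omega]
        exact two_pow_mul_ascPochhammer_div_factorial_mul_choose m d j hjd
    _ = _ := by
      rw [← mul_sum, sum_range_pow_div_factorial_mul_factorial,
        show 2 * (m + 1 + d) - 2 * (m + 1) = 2 * d by omega, add_tsub_cancel_left, cast_add,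
        cast_one, ascPochhammer_eval_natCast_add_one, add_comm m (2 * d),
        show (-2 : ℝ) + 1 = -1 by norm_num]
      ring
end

section
/- Let p be a polynomial in two variables with real coefficients and let r be a natural number. Suppose there exists a continuous function h : ℝ² → ℝ such that h(x, y) = p(x, y)/(x − y)^r for all (x, y) with x ≠ y. Then (x − y)^r divides p in the polynomial ring ℝ[x, y]. In particular, if the total degree of p is strictly less than r, then p = 0. -/
/-! If `p / (x - y)^(r+1)` extends continuously across the diagonal, then `p` vanishes on the
diagonal, since `p = h · (x - y)^(r+1)` off the diagonal and both sides are continuous. A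
polynomial vanishing on `{x = y}` is divisible by `x - y`: substituting `y` for `x` kills it, and
`x - y` divides the difference between a polynomial and its substitution. Dividing out and
inducting on `r` gives `(x - y)^r ∣ p`, and comparing degrees in `x` gives the last claim. -/

namespace MvPolynomial

variable {R σ : Type*} [CommRing R]

theorem dvd_aeval_sub_aeval {S : Type*} [CommRing S] [Algebra R S] {a : S} {x y : σ → S}
    (hxy : ∀ i, a ∣ x i - y i) (p : MvPolynomial σ R) : a ∣ aeval x p - aeval y p := by
  induction p using MvPolynomial.induction_on with
  | C c => simp
  | add p q hp hq => simpa only [map_add, add_sub_add_comm] using dvd_add hp hq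
  | mul_X p i hp =>
    have expand : aeval x (p * X i) - aeval y (p * X i) =
        (aeval x p - aeval y p) * x i + aeval y p * (x i - y i) := by
      simp only [map_mul, aeval_X]; ring
    rw [expand]
    exact dvd_add (dvd_mul_of_dvd_left hp _) (dvd_mul_of_dvd_right (hxy i) _)

theorem X_sub_X_dvd_of_eval_eq_zero [IsDomain R] [Infinite R] [DecidableEq σ] {i j : σ}
    {p : MvPolynomial σ R} (hp : ∀ x : σ → R, x i = x j → eval x p = 0) : X i - X j ∣ p := by
  set y : σ → MvPolynomial σ R := Function.update X i (X j)
  have hsubst : bind₁ y p = 0 := funext fun v => by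
    rw [map_zero, eval, eval₂Hom_bind₁]
    refine hp _ ?_
    by_cases hji : j = i <;> simp [y, hji]
  have hdvd : ∀ k, X i - X j ∣ X k - y k := fun k => by
    by_cases hki : k = i <;> simp [y, hki]
  have key := dvd_aeval_sub_aeval hdvd p
  rwa [aeval_X_left_apply, aeval_eq_bind₁, hsubst, sub_zero] at key

theorem degreeOf_X_sub_X [Nontrivial R] {i j : σ} (hij : i ≠ j) :
    degreeOf i (X i - X j : MvPolynomial σ R) = 1 := by
  classical
  rw [sub_eq_add_neg, degreeOf_add_eq_of_degreeOf_lt] <;>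
    simp [degreeOf_neg, degreeOf_X_of_ne hij]

theorem le_totalDegree_of_X_sub_X_pow_dvd [IsDomain R] {i j : σ} (hij : i ≠ j) {r : ℕ}
    {p : MvPolynomial σ R} (hdvd : (X i - X j) ^ r ∣ p) (hp : p ≠ 0) : r ≤ p.totalDegree := by
  have hXX : (X i - X j : MvPolynomial σ R) ≠ 0 := fun h0 => by
    simpa [h0] using degreeOf_X_sub_X (R := R) hij
  calc r = degreeOf i ((X i - X j : MvPolynomial σ R) ^ r) := by
        rw [degreeOf_pow_eq _ _ _ hXX, degreeOf_X_sub_X hij, mul_one]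
    _ ≤ ((X i - X j : MvPolynomial σ R) ^ r).totalDegree := degreeOf_le_totalDegree _ _
    _ ≤ p.totalDegree := totalDegree_le_of_dvd_of_isDomain hdvd hp

end MvPolynomial

open MvPolynomial

theorem eval_diag_eq_zero_of_continuous_div {p : MvPolynomial (Fin 2) ℝ} {r : ℕ} (hr : r ≠ 0)
    {h : ℝ × ℝ → ℝ} (hc : Continuous h)
    (heq : ∀ x y : ℝ, x ≠ y → h (x, y) = eval ![x, y] p / (x - y) ^ r) (a : ℝ) :
    eval ![a, a] p = 0 := by
  have hslice : (fun y => eval ![a, y] p) = fun y => h (a, y) * (a - y) ^ r := by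
    refine Continuous.ext_on (dense_compl_singleton a) ((continuous_eval p).comp (by fun_prop))
      (by fun_prop) fun y hy => ?_
    have hay : a - y ≠ 0 := sub_ne_zero.mpr (Ne.symm hy)
    rw [heq a y (sub_ne_zero.mp hay), div_mul_cancel₀ _ (pow_ne_zero r hay)]
  simpa [hr] using congrFun hslice a

theorem X_sub_X_pow_dvd_of_continuous_div {h : ℝ × ℝ → ℝ} (hc : Continuous h) (r : ℕ) :
    ∀ p : MvPolynomial (Fin 2) ℝ,
      (∀ x y : ℝ, x ≠ y → h (x, y) = eval ![x, y] p / (x - y) ^ r) → (X 0 - X 1) ^ r ∣ p := by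
  induction r with
  | zero => simp
  | succ r ih =>
    intro p heq
    obtain ⟨q, rfl⟩ : X 0 - X 1 ∣ p := X_sub_X_dvd_of_eval_eq_zero fun x hx => by
      have hdiag : x = ![x 0, x 0] := by ext k; fin_cases k <;> simp [hx]
      rw [hdiag]
      exact eval_diag_eq_zero_of_continuous_div r.succ_ne_zero hc heq (x 0)
    rw [pow_succ']
    refine mul_dvd_mul_left _ (ih q fun x y hxy => ?_)
    have hxy' : x - y ≠ 0 := sub_ne_zero.mpr hxy
    rw [heq x y hxy, map_mul, pow_succ']
    simpa using mul_div_mul_left (eval ![x, y] q) ((x - y) ^ r) hxy'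

/-- If `p ∈ ℝ[x, y]`, `r ∈ ℕ`, and there is a continuous `h : ℝ² → ℝ` with
`h(x,y) = p(x,y)/(x-y)^r` for `x ≠ y`, then `(x - y)^r` divides `p` in `ℝ[x, y]`;
in particular, if the total degree of `p` is less than `r`, then `p = 0`. -/
theorem stmt_14 (p : MvPolynomial (Fin 2) ℝ) (r : ℕ)
    (h : ℝ × ℝ → ℝ) (hc : Continuous h)
    (heq : ∀ x y : ℝ, x ≠ y → h (x, y) = MvPolynomial.eval ![x, y] p / (x - y) ^ r) :
    ((MvPolynomial.X 0 - MvPolynomial.X 1) ^ r ∣ p) ∧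
      (p.totalDegree < r → p = 0) := by
  have hdvd := X_sub_X_pow_dvd_of_continuous_div hc r p heq
  refine ⟨hdvd, fun hdeg => ?_⟩
  by_contra hp
  exact hdeg.not_ge (le_totalDegree_of_X_sub_X_pow_dvd (by decide) hdvd hp)
end

section
/- For m ∈ ℕ and λ ∈ ℂ, let e(m, λ) denote the linear functional on the polynomial ring ℂ[z] given by ⟨e(m, λ), g⟩ = g^{(m)}(λ) (the m-th derivative of g evaluated at λ). Let C be a finite-dimensional subspace of the dual space of ℂ[z], let V_C = { g ∈ ℂ[z] : φ(g) = 0 for all φ ∈ C }, and assume that every linear functional on ℂ[z] that vanishes on V_C belongs to C. Let λ ∈ ℂ with λ ≠ 0, let n, M be natural numbers with M > n, and assume: (a) the multiplication map g ↦ z^M g maps V_C into V_C; and (b) there exist a₀, …, a_n ∈ ℂ with a_n ≠ 0 such that the functional Σ_{m=0}^n a_m e(m, λ) belongs to C. Then e(m, λ) ∈ C for every m with 0 ≤ m ≤ n. -/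
/-- The linear functional `e(m, λ)` on `ℂ[z]` given by `g ↦ g^{(m)}(λ)`. -/
noncomputable def pointCondition (m : ℕ) (lam : ℂ) : Module.Dual ℂ (Polynomial ℂ) :=
  (Polynomial.leval lam).comp ((Polynomial.derivative : Module.End ℂ (Polynomial ℂ)) ^ m)

/-!
Write `p = z^M - λ^M`, which has a simple zero at `λ` because `λ ≠ 0` and `M ≠ 0`. Since `V_C`
is stable under `z^M`, the space `C` is stable under `φ ↦ φ ∘ p`. By the Leibniz rule,
composing a condition `b e(n, λ) + (lower order)` with `p` gives
`n b p'(λ) e(n - 1, λ) + (lower order)`, so repeating this produces conditions in `C` of every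
order below `n`, each with nonzero leading coefficient. Going back up, once all `e(j, λ)` with
`j < m` lie in `C`, a condition of order `m` in `C` forces `e(m, λ) ∈ C`.
-/

open Polynomial

lemma Submodule.comp_mem_of_mapsTo_dualCoannihilator {R E : Type*} [CommSemiring R]
    [AddCommMonoid E] [Module R E] {Φ : Submodule R (Module.Dual R E)}
    (hΦ : Φ.dualCoannihilator.dualAnnihilator ≤ Φ) {T : E →ₗ[R] E}
    (hT : Set.MapsTo T Φ.dualCoannihilator Φ.dualCoannihilator) {φ : Module.Dual R E}
    (hφ : φ ∈ Φ) : φ ∘ₗ T ∈ Φ :=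
  hΦ <| (Submodule.mem_dualAnnihilator _).2 fun _ hg =>
    (Submodule.mem_dualCoannihilator _).1 (hT hg) φ hφ

lemma pointCondition_apply (m : ℕ) (lam : ℂ) (g : ℂ[X]) :
    pointCondition m lam g = (derivative^[m] g).eval lam := by
  simp [pointCondition, Module.End.pow_apply, leval_apply]

lemma pointCondition_comp_mulLeft (m : ℕ) (lam : ℂ) (p : ℂ[X]) :
    pointCondition m lam ∘ₗ LinearMap.mulLeft ℂ p =
      ∑ j ∈ Finset.range (m + 1),
        ((m.choose j : ℂ) * (derivative^[m - j] p).eval lam) • pointCondition j lam := by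
  refine LinearMap.ext fun g => ?_
  simp only [LinearMap.comp_apply, LinearMap.mulLeft_apply, LinearMap.sum_apply,
    LinearMap.smul_apply, smul_eq_mul, pointCondition_apply,
    iterate_derivative_mul, eval_finsetSum, nsmul_eq_mul, eval_mul, eval_natCast, mul_assoc]

noncomputable def pointConditionSpan (m : ℕ) (lam : ℂ) : Submodule ℂ (Module.Dual ℂ ℂ[X]) :=
  Submodule.span ℂ ((pointCondition · lam) '' Set.Iio m)

lemma pointConditionSpan_le_iff {m : ℕ} {lam : ℂ} {Φ : Submodule ℂ (Module.Dual ℂ ℂ[X])} :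
    pointConditionSpan m lam ≤ Φ ↔ ∀ j < m, pointCondition j lam ∈ Φ := by
  simp [pointConditionSpan, Submodule.span_le, Set.subset_def]

lemma pointCondition_mem_pointConditionSpan {j m : ℕ} (lam : ℂ) (h : j < m) :
    pointCondition j lam ∈ pointConditionSpan m lam :=
  pointConditionSpan_le_iff.1 le_rfl j h

lemma pointConditionSpan_mono {m m' : ℕ} (lam : ℂ) (h : m ≤ m') :
    pointConditionSpan m lam ≤ pointConditionSpan m' lam :=
  pointConditionSpan_le_iff.2 fun _ hj => pointCondition_mem_pointConditionSpan lam (hj.trans_le h)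

lemma sum_smul_pointCondition_mem_pointConditionSpan (m : ℕ) (b : ℕ → ℂ) (lam : ℂ) :
    ∑ j ∈ Finset.range m, b j • pointCondition j lam ∈ pointConditionSpan m lam :=
  Submodule.sum_mem _ fun _ hj => Submodule.smul_mem _ _ <|
    pointCondition_mem_pointConditionSpan lam (Finset.mem_range.1 hj)

section SimpleRoot

variable {lam : ℂ} {p : ℂ[X]}

lemma pointCondition_comp_mulLeft_mem (hp : p.eval lam = 0) (m : ℕ) :
    pointCondition m lam ∘ₗ LinearMap.mulLeft ℂ p ∈ pointConditionSpan m lam := by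
  rw [pointCondition_comp_mulLeft, Finset.sum_range_succ, Nat.sub_self, Function.iterate_zero,
    id_eq, hp, mul_zero, zero_smul, add_zero]
  exact sum_smul_pointCondition_mem_pointConditionSpan m _ lam

lemma pointCondition_succ_comp_mulLeft_sub_mem (hp : p.eval lam = 0) (m : ℕ) :
    pointCondition (m + 1) lam ∘ₗ LinearMap.mulLeft ℂ p -
        (((m + 1 : ℕ) : ℂ) * (derivative p).eval lam) • pointCondition m lam ∈
      pointConditionSpan m lam := by
  rw [pointCondition_comp_mulLeft, Finset.sum_range_succ, Finset.sum_range_succ, Nat.sub_self,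
    Function.iterate_zero, id_eq, hp, mul_zero, zero_smul, add_zero, Nat.choose_succ_self_right,
    Nat.add_sub_cancel_left, Function.iterate_one, add_sub_cancel_right]
  exact sum_smul_pointCondition_mem_pointConditionSpan m _ lam

lemma comp_mulLeft_mem_pointConditionSpan (hp : p.eval lam = 0) {m : ℕ} {φ : Module.Dual ℂ ℂ[X]}
    (hφ : φ ∈ pointConditionSpan (m + 1) lam) :
    φ ∘ₗ LinearMap.mulLeft ℂ p ∈ pointConditionSpan m lam := by
  suffices pointConditionSpan (m + 1) lam ≤
      (pointConditionSpan m lam).comap (LinearMap.mulLeft ℂ p).dualMap from this hφ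
  exact pointConditionSpan_le_iff.2 fun j hj =>
    pointConditionSpan_mono lam (Nat.lt_succ_iff.1 hj) (pointCondition_comp_mulLeft_mem hp j)

lemma pointConditionSpan_succ_le_of_le {Φ : Submodule ℂ (Module.Dual ℂ ℂ[X])}
    {n : ℕ} (hlower : pointConditionSpan n lam ≤ Φ) {c : Module.Dual ℂ ℂ[X]} (hc : c ∈ Φ) {b : ℂ}
    (hb : b ≠ 0) (hcb : c - b • pointCondition n lam ∈ pointConditionSpan n lam) :
    pointConditionSpan (n + 1) lam ≤ Φ := by
  have hsmul : b • pointCondition n lam ∈ Φ := by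
    simpa using Φ.sub_mem hc (hlower hcb)
  refine pointConditionSpan_le_iff.2 fun j hj => ?_
  rcases (Nat.lt_succ_iff.1 hj).lt_or_eq with hj | rfl
  · exact pointConditionSpan_le_iff.1 hlower j hj
  · exact (Submodule.smul_mem_iff _ hb).1 hsmul

lemma comp_mulLeft_sub_smul_mem_pointConditionSpan (hp : p.eval lam = 0) {k : ℕ}
    {c : Module.Dual ℂ ℂ[X]} {b : ℂ}
    (hcb : c - b • pointCondition (k + 1) lam ∈ pointConditionSpan (k + 1) lam) :
    c ∘ₗ LinearMap.mulLeft ℂ p - (b * (((k + 1 : ℕ) : ℂ) * (derivative p).eval lam)) •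
      pointCondition k lam ∈ pointConditionSpan k lam := by
  convert Submodule.add_mem _ (comp_mulLeft_mem_pointConditionSpan hp hcb)
    (Submodule.smul_mem _ b (pointCondition_succ_comp_mulLeft_sub_mem hp k)) using 1
  simp only [LinearMap.sub_comp, LinearMap.smul_comp, smul_sub, mul_smul]
  abel

theorem pointConditionSpan_succ_le_of_sub_mem {Φ : Submodule ℂ (Module.Dual ℂ ℂ[X])}
    (hΦ : ∀ φ ∈ Φ, φ ∘ₗ LinearMap.mulLeft ℂ p ∈ Φ) (hp : p.eval lam = 0)
    (hp' : (derivative p).eval lam ≠ 0) {n : ℕ} {c : Module.Dual ℂ ℂ[X]} (hc : c ∈ Φ) {b : ℂ}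
    (hb : b ≠ 0) (hcb : c - b • pointCondition n lam ∈ pointConditionSpan n lam) :
    pointConditionSpan (n + 1) lam ≤ Φ := by
  induction n generalizing c b with
  | zero =>
    exact pointConditionSpan_succ_le_of_le (by simp [pointConditionSpan]) hc hb hcb
  | succ k ih =>
    have hk : ((k + 1 : ℕ) : ℂ) ≠ 0 := Nat.cast_ne_zero.2 k.succ_ne_zero
    exact pointConditionSpan_succ_le_of_le
      (ih (hΦ c hc) (mul_ne_zero hb (mul_ne_zero hk hp'))
        (comp_mulLeft_sub_smul_mem_pointConditionSpan hp hcb)) hc hb hcb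

end SimpleRoot

theorem stmt_15_general (C : Submodule ℂ (Module.Dual ℂ (Polynomial ℂ)))
    (V : Set (Polynomial ℂ)) (hV : V = {g : Polynomial ℂ | ∀ φ ∈ C, φ g = 0})
    (hsat : ∀ φ : Module.Dual ℂ (Polynomial ℂ), (∀ g ∈ V, φ g = 0) → φ ∈ C)
    (lam : ℂ) (hlam : lam ≠ 0) (n M : ℕ) (hM : n < M)
    (hinv : ∀ g ∈ V, Polynomial.X ^ M * g ∈ V)
    (a : ℕ → ℂ) (han : a n ≠ 0)
    (hc : (∑ m ∈ Finset.range (n + 1), a m • pointCondition m lam) ∈ C) :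
    ∀ m ≤ n, pointCondition m lam ∈ C := by
  have hVC : V = C.dualCoannihilator := by
    ext g
    rw [hV, SetLike.mem_coe, Submodule.mem_dualCoannihilator, Set.mem_ofPred_eq]
  subst hVC
  set p : ℂ[X] := X ^ M - Polynomial.C (lam ^ M)
  have hstable (φ) (hφ : φ ∈ C) : φ ∘ₗ LinearMap.mulLeft ℂ p ∈ C := by
    have hXM := C.comp_mem_of_mapsTo_dualCoannihilator
      (fun ψ hψ => hsat ψ ((Submodule.mem_dualAnnihilator ψ).1 hψ))
      (T := LinearMap.mulLeft ℂ (X ^ M)) hinv hφ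
    convert C.sub_mem hXM (C.smul_mem (lam ^ M) hφ) using 1
    refine LinearMap.ext fun g => ?_
    simp only [LinearMap.comp_apply, LinearMap.mulLeft_apply, LinearMap.sub_apply,
      LinearMap.smul_apply, p, sub_mul, ← smul_eq_C_mul, map_sub, map_smul]
  have hp : p.eval lam = 0 := by simp [p]
  have hp' : (derivative p).eval lam ≠ 0 := by
    rw [derivative_sub, derivative_C, sub_zero, derivative_X_pow, eval_mul, eval_C, eval_pow,
      eval_X]
    exact mul_ne_zero (Nat.cast_ne_zero.2 (by omega)) (pow_ne_zero _ hlam)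
  have hcn : (∑ m ∈ Finset.range (n + 1), a m • pointCondition m lam) - a n • pointCondition n lam ∈
      pointConditionSpan n lam := by
    rw [Finset.sum_range_succ, add_sub_cancel_right]
    exact sum_smul_pointCondition_mem_pointConditionSpan n a lam
  exact fun m hm => pointConditionSpan_le_iff.1
    (pointConditionSpan_succ_le_of_sub_mem hstable hp hp' hc han hcn) m (Nat.lt_succ_of_le hm)

/-- Let `C` be a finite-dimensional space of linear functionals on `ℂ[z]`, let
`V_C = {g : φ(g) = 0 ∀ φ ∈ C}`, and assume every functional vanishing on `V_C` lies in
`C`. If `λ ≠ 0`, `M > n`, multiplication by `z^M` maps `V_C` into itself, and some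
functional `Σ_{m=0}^n a_m e(m, λ)` with `a_n ≠ 0` lies in `C`, then `e(m, λ) ∈ C` for all
`0 ≤ m ≤ n`. -/
theorem stmt_15 (C : Submodule ℂ (Module.Dual ℂ (Polynomial ℂ)))
    (hfin : FiniteDimensional ℂ C)
    (V : Set (Polynomial ℂ)) (hV : V = {g : Polynomial ℂ | ∀ φ ∈ C, φ g = 0})
    (hsat : ∀ φ : Module.Dual ℂ (Polynomial ℂ), (∀ g ∈ V, φ g = 0) → φ ∈ C)
    (lam : ℂ) (hlam : lam ≠ 0) (n M : ℕ) (hM : n < M)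
    (hinv : ∀ g ∈ V, Polynomial.X ^ M * g ∈ V)
    (a : ℕ → ℂ) (han : a n ≠ 0)
    (hc : (∑ m ∈ Finset.range (n + 1), a m • pointCondition m lam) ∈ C) :
    ∀ m ≤ n, pointCondition m lam ∈ C :=
  stmt_15_general C V hV hsat lam hlam n M hM hinv a han hc
end

section
/- Fix s₁, s₂ ∈ ℝ and define τ(x) = (s₁ + x)²/2 + s₂, u₁(x) = −3((x + s₁)² − 2 s₂)/(2 τ(x)²), u₀(x) = −6 s₂ (x + s₁)/τ(x)³, and Ψ(x, z) = (1 − (s₁ + x)/(τ(x) z)) e^{xz}. Then for every z ∈ ℂ with z ≠ 0 and every x ∈ ℝ with τ(x) ≠ 0, ∂³Ψ/∂x³ (x, z) + u₁(x) · ∂Ψ/∂x (x, z) + u₀(x) · Ψ(x, z) = z³ · Ψ(x, z). -/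
/-!
Write `Ψ(x, z) = (1 - q(s₁ + x)/z) e^{xz}` with `q(w) = w / (w²/2 + s₂)`. Since
`(f e^{xz})' = (f' + z f) e^{xz}`, both sides of the equation become Laurent polynomials in `z`
times `e^{xz}`, and the coefficients of `z`, `1` and `z⁻¹` of their difference vanish exactly when
`u₁ = 3q'`, `u₀ = 3q'' + u₁ q` and `q''' + u₁ q' + u₀ q = 0`. For this `q` the three relations
are polynomial identities in `w`, `s₂` and `τ⁻¹`.
-/

open Set Complex

theorem eqOn_iteratedDeriv_succ_of_hasDerivAt {𝕜 F : Type*} [NontriviallyNormedField 𝕜]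
    [NormedAddCommGroup F] [NormedSpace 𝕜 F] {f g g' : 𝕜 → F} {U : Set 𝕜} {n : ℕ}
    (hU : IsOpen U) (hfg : EqOn (iteratedDeriv n f) g U)
    (hg : ∀ y ∈ U, HasDerivAt g (g' y) y) :
    EqOn (iteratedDeriv (n + 1) f) g' U := fun y hy => by
  rw [iteratedDeriv_succ, (hfg.eventuallyEq_of_mem (hU.mem_nhds hy)).deriv_eq]
  exact (hg y hy).deriv

theorem HasDerivAt.mul_cexp_ofReal_mul {f : ℝ → ℂ} {f' : ℂ} {y : ℝ} (z : ℂ)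
    (hf : HasDerivAt f f' y) :
    HasDerivAt (fun y : ℝ => f y * cexp (y * z)) ((f' + z * f y) * cexp (y * z)) y := by
  have he : HasDerivAt (fun y : ℝ => cexp (y * z)) (cexp (y * z) * z) y := by
    simpa using (((hasDerivAt_id (y : ℂ)).mul_const z).cexp).comp_ofReal
  exact (hf.mul he).congr_deriv (by ring)

theorem eqOn_iteratedDeriv_three_mul_cexp_ofReal_mul {U : Set ℝ} (hU : IsOpen U)
    {f f₁ f₂ f₃ : ℝ → ℂ} (z : ℂ) (h₀ : ∀ y ∈ U, HasDerivAt f (f₁ y) y)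
    (h₁ : ∀ y ∈ U, HasDerivAt f₁ (f₂ y) y) (h₂ : ∀ y ∈ U, HasDerivAt f₂ (f₃ y) y) :
    EqOn (iteratedDeriv 3 fun y : ℝ => f y * cexp (y * z))
      (fun y => (f₃ y + 3 * z * f₂ y + 3 * z ^ 2 * f₁ y + z ^ 3 * f y) * cexp (y * z)) U := by
  have d₁ := eqOn_iteratedDeriv_succ_of_hasDerivAt (n := 0)
    (f := fun y : ℝ => f y * cexp (y * z)) hU (by simp [EqOn])
    fun y hy => (h₀ y hy).mul_cexp_ofReal_mul z
  have d₂ := eqOn_iteratedDeriv_succ_of_hasDerivAt hU d₁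
    fun y hy => ((h₁ y hy).add ((h₀ y hy).const_mul z)).mul_cexp_ofReal_mul z
  have d₃ := eqOn_iteratedDeriv_succ_of_hasDerivAt hU d₂
    fun y hy => (((h₂ y hy).add ((h₁ y hy).const_mul z)).add
      (((h₁ y hy).add ((h₀ y hy).const_mul z)).const_mul z)).mul_cexp_ofReal_mul z
  exact fun y hy => (d₃ hy).trans (by simp only [Pi.add_apply]; ring)

section

variable {c w : ℝ}

theorem hasDerivAt_div_sq_half_add (hT : w ^ 2 / 2 + c ≠ 0) :
    HasDerivAt (fun w => w / (w ^ 2 / 2 + c)) ((c - w ^ 2 / 2) / (w ^ 2 / 2 + c) ^ 2) w := by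
  refine ((hasDerivAt_id' w).fun_div
    ((hasDerivAt_pow 2 w).div_const 2 |>.add_const c) hT).congr_deriv ?_
  field_simp
  ring

theorem hasDerivAt_div_sq_half_add_sq (hT : w ^ 2 / 2 + c ≠ 0) :
    HasDerivAt (fun w => (c - w ^ 2 / 2) / (w ^ 2 / 2 + c) ^ 2)
      ((w ^ 3 / 2 - 3 * c * w) / (w ^ 2 / 2 + c) ^ 3) w := by
  refine (((hasDerivAt_pow 2 w).div_const 2 |>.const_sub c).fun_div
    ((hasDerivAt_pow 2 w).div_const 2 |>.add_const c |>.fun_pow 2)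
    (pow_ne_zero 2 hT)).congr_deriv ?_
  have hT' : w ^ 2 + 2 * c ≠ 0 := fun h => hT (by linear_combination h / 2)
  field_simp
  ring

theorem hasDerivAt_div_sq_half_add_cube (hT : w ^ 2 / 2 + c ≠ 0) :
    HasDerivAt (fun w => (w ^ 3 / 2 - 3 * c * w) / (w ^ 2 / 2 + c) ^ 3)
      ((-3 * w ^ 4 / 4 + 9 * c * w ^ 2 - 3 * c ^ 2) / (w ^ 2 / 2 + c) ^ 4) w := by
  refine ((((hasDerivAt_pow 3 w).div_const 2).fun_sub
    ((hasDerivAt_id' w).const_mul (3 * c))).fun_div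
    ((hasDerivAt_pow 2 w).div_const 2 |>.add_const c |>.fun_pow 3)
    (pow_ne_zero 3 hT)).congr_deriv ?_
  have hT' : w ^ 2 + 2 * c ≠ 0 := fun h => hT (by linear_combination h / 2)
  field_simp
  ring

end

theorem laurent_coeffs_vanish {K : Type*} [Field K] {z q q₁ q₂ q₃ u₀ u₁ : K} (hz : z ≠ 0)
    (h₁ : u₁ = 3 * q₁) (h₀ : u₀ = 3 * q₂ + u₁ * q) (h : q₃ + u₁ * q₁ + u₀ * q = 0) :
    (-(q₃ / z) + 3 * z * -(q₂ / z) + 3 * z ^ 2 * -(q₁ / z) + z ^ 3 * (1 - q / z)) +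
        u₁ * (-(q₁ / z) + z * (1 - q / z)) + u₀ * (1 - q / z) = z ^ 3 * (1 - q / z) := by
  field_simp
  linear_combination z ^ 2 * h₁ + z * h₀ - h

theorem rational_laurent_identity {K : Type*} [Field K] [CharZero K] {z : K} (hz : z ≠ 0)
    (w c T : K) :
    (-((-3 * w ^ 4 / 4 + 9 * c * w ^ 2 - 3 * c ^ 2) / T ^ 4 / z) +
        3 * z * -((w ^ 3 / 2 - 3 * c * w) / T ^ 3 / z) +
        3 * z ^ 2 * -((c - w ^ 2 / 2) / T ^ 2 / z) + z ^ 3 * (1 - w / T / z)) +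
      -3 * (w ^ 2 - 2 * c) / (2 * T ^ 2) * (-((c - w ^ 2 / 2) / T ^ 2 / z) + z * (1 - w / T / z)) +
      -6 * c * w / T ^ 3 * (1 - w / T / z) = z ^ 3 * (1 - w / T / z) :=
  laurent_coeffs_vanish hz (by ring) (by ring) (by ring)

/-- Example 7.1: with `τ(x) = (s₁+x)²/2 + s₂`, `u₁ = -3((x+s₁)² - 2s₂)/(2τ²)`,
`u₀ = -6s₂(x+s₁)/τ³`, and wave function `Ψ(x,z) = (1 - (s₁+x)/(τ(x) z)) e^{xz}`, one has
`Ψ''' + u₁ Ψ' + u₀ Ψ = z³ Ψ` for every `z ≠ 0` and every `x` with `τ(x) ≠ 0`. -/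
theorem stmt_16 (s₁ s₂ : ℝ) (τ u₀ u₁ : ℝ → ℝ)
    (hτ : ∀ x : ℝ, τ x = (s₁ + x) ^ 2 / 2 + s₂)
    (hu₁ : ∀ x : ℝ, u₁ x = -3 * ((x + s₁) ^ 2 - 2 * s₂) / (2 * (τ x) ^ 2))
    (hu₀ : ∀ x : ℝ, u₀ x = -6 * s₂ * (x + s₁) / (τ x) ^ 3)
    (Ψ : ℝ → ℂ → ℂ)
    (hΨ : ∀ (x : ℝ) (z : ℂ),
      Ψ x z = (1 - ((s₁ : ℂ) + (x : ℂ)) / ((τ x : ℂ) * z)) * Complex.exp ((x : ℂ) * z)) :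
    ∀ z : ℂ, z ≠ 0 → ∀ x : ℝ, τ x ≠ 0 →
      iteratedDeriv 3 (fun x' => Ψ x' z) x + (u₁ x : ℂ) * deriv (fun x' => Ψ x' z) x +
          (u₀ x : ℂ) * Ψ x z = z ^ 3 * Ψ x z := by
  intro z hz x hx
  have hU : IsOpen {y | τ y ≠ 0} :=
    isOpen_ne_fun (by rw [show τ = _ from funext hτ]; fun_prop) continuous_const
  have hq {r r' : ℝ → ℝ} (hr : ∀ w, w ^ 2 / 2 + s₂ ≠ 0 → HasDerivAt r (r' w) w) :
      ∀ y ∈ {y | τ y ≠ 0},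
        HasDerivAt (fun y : ℝ => -((r (s₁ + y) : ℂ) / z)) (-((r' (s₁ + y) : ℂ) / z)) y :=
    fun y hy => (((hr _ (hτ y ▸ hy)).comp_const_add s₁ y).ofReal_comp.div_const z).neg
  have h₀ := hq fun w hw => hasDerivAt_div_sq_half_add hw
  have h₁ := hq fun w hw => hasDerivAt_div_sq_half_add_sq hw
  have h₂ := hq fun w hw => hasDerivAt_div_sq_half_add_cube hw
  have hΨz (y : ℝ) :
      Ψ y z = (1 + -((((s₁ + y) / ((s₁ + y) ^ 2 / 2 + s₂) : ℝ) : ℂ) / z)) * cexp (y * z) := by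
    rw [hΨ, hτ]
    push_cast
    rw [div_mul_eq_div_div, sub_eq_add_neg]
  simp only [hΨz]
  rw [eqOn_iteratedDeriv_three_mul_cexp_ofReal_mul hU z (fun y hy => (h₀ y hy).const_add 1)
      h₁ h₂ hx, ((h₀ x hx).const_add 1 |>.mul_cexp_ofReal_mul z).deriv, hu₁, hu₀, hτ]
  beta_reduce
  -- `ring` treats `τ⁻¹` as an atom only if `τ` is not expanded into a polynomial in `x`.
  generalize (s₁ + x) ^ 2 / 2 + s₂ = T
  push_cast
  linear_combination cexp (x * z) * rational_laurent_identity hz ((s₁ : ℂ) + x) s₂ T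
end

section
/- Fix s₁, s₂ ∈ ℝ and define τ(x) = (s₁ + x)²/2 + s₂, u₁(x) = −3((x + s₁)² − 2 s₂)/(2 τ(x)²), u₀(x) = −6 s₂ (x + s₁)/τ(x)³, and Ψ*(x, z) = (1 + (s₁ + x)/(τ(x) z) + 1/(τ(x) z²)) e^{−xz}. Then for every z ∈ ℂ with z ≠ 0 and every x ∈ ℝ with τ(x) ≠ 0, −∂³Ψ*/∂x³ (x, z) − u₁(x) · ∂Ψ*/∂x (x, z) + (u₀(x) − u₁'(x)) · Ψ*(x, z) = z³ · Ψ*(x, z). -/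
/-!
Write `w = s₁ + x`, `b = 1/τ`, `a = w b`, so that `Ψ* = φ e^{-xz}` with `φ = 1 + a/z + b/z²`.
Since `τ' = w` and `w' = 1`, the function `b` solves `b' = -w b²`, so all derivatives of `φ` are
polynomials in `w` and `b`. Conjugating by the exponential,
`e^{xz} (L* - z³)(φ e^{-xz}) = -φ''' + 3zφ'' - 3z²φ' - u₁ (φ' - zφ) + (u₀ - u₁') φ`,
a Laurent polynomial in `z`. Its `z¹`-coefficient `u₁ - 3a'` vanishes because `u₁ = 3a'`, and the
remaining coefficients vanish by the relation `b τ = 1`.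
-/

open Filter Topology

theorem iteratedDeriv_three_eq_of_hasDerivAt {𝕜 F : Type*} [NontriviallyNormedField 𝕜]
    [NormedAddCommGroup F] [NormedSpace 𝕜 F] {f f₁ f₂ : 𝕜 → F} {f₃ : F} {x : 𝕜}
    (h₁ : ∀ᶠ y in 𝓝 x, HasDerivAt f (f₁ y) y) (h₂ : ∀ᶠ y in 𝓝 x, HasDerivAt f₁ (f₂ y) y)
    (h₃ : HasDerivAt f₂ f₃ x) : iteratedDeriv 3 f x = f₃ := by
  have h₂' : deriv (deriv f) =ᶠ[𝓝 x] f₂ := by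
    filter_upwards [h₁.eventually_nhds, h₂] with y hy₁ hy₂
    rw [EventuallyEq.deriv_eq (hy₁.mono fun _ h => h.deriv), hy₂.deriv]
  rw [iteratedDeriv_eq_iterate]
  simp only [Function.iterate_succ_apply', Function.iterate_zero_apply]
  rw [h₂'.deriv_eq, h₃.deriv]

theorem HasDerivAt.mul_cexp_neg_mul {φ : ℝ → ℂ} {φ' z : ℂ} {y : ℝ} (h : HasDerivAt φ φ' y) :
    HasDerivAt (fun t : ℝ => φ t * Complex.exp (-(t * z)))
      ((φ' - z * φ y) * Complex.exp (-(y * z))) y := by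
  refine (h.fun_mul ((hasDerivAt_id y).ofReal_comp.mul_const z).fun_neg.cexp).congr_deriv ?_
  simp only [id, Complex.ofReal_one]
  ring

theorem iteratedDeriv_three_mul_cexp_neg_mul {φ φ₁ φ₂ : ℝ → ℂ} {φ₃ z : ℂ} {x : ℝ}
    (h₁ : ∀ᶠ y in 𝓝 x, HasDerivAt φ (φ₁ y) y) (h₂ : ∀ᶠ y in 𝓝 x, HasDerivAt φ₁ (φ₂ y) y)
    (h₃ : HasDerivAt φ₂ φ₃ x) :
    iteratedDeriv 3 (fun t : ℝ => φ t * Complex.exp (-(t * z))) x =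
      (φ₃ - 3 * z * φ₂ x + 3 * z ^ 2 * φ₁ x - z ^ 3 * φ x) * Complex.exp (-(x * z)) := by
  refine iteratedDeriv_three_eq_of_hasDerivAt
    (f₁ := fun t => (φ₁ t - z * φ t) * Complex.exp (-(t * z)))
    (f₂ := fun t => (φ₂ t - 2 * z * φ₁ t + z ^ 2 * φ t) * Complex.exp (-(t * z)))
    (h₁.mono fun y hy => hy.mul_cexp_neg_mul) ?_ ?_
  · filter_upwards [h₁, h₂] with y hy₁ hy₂
    refine ((hy₂.fun_sub (hy₁.const_mul z)).mul_cexp_neg_mul).congr_deriv ?_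
    ring
  · refine (((h₃.fun_sub (h₂.self_of_nhds.const_mul (2 * z))).fun_add
      (h₁.self_of_nhds.const_mul (z ^ 2))).mul_cexp_neg_mul).congr_deriv ?_
    ring

namespace Riccati

variable {𝕜 𝔸 : Type*} [NontriviallyNormedField 𝕜] [NontriviallyNormedField 𝔸]
  [NormedAlgebra 𝕜 𝔸] {w b : 𝕜 → 𝔸} {y : 𝕜}
  (hw : HasDerivAt w 1 y) (hb : HasDerivAt b (-(w y * b y ^ 2)) y)
include hw hb

theorem hasDerivAt_sub_sq_mul_sq : HasDerivAt (fun t => b t - w t ^ 2 * b t ^ 2)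
    (-3 * w y * b y ^ 2 + 2 * w y ^ 3 * b y ^ 3) y := by
  refine (hb.fun_sub ((hw.fun_pow 2).fun_mul (hb.fun_pow 2))).congr_deriv ?_
  ring

variable (z : 𝔸)

theorem hasDerivAt_laurent (c : 𝔸) :
    HasDerivAt (fun t => c + (w t * b t / z + b t / z ^ 2))
      ((b y - w y ^ 2 * b y ^ 2) / z - w y * b y ^ 2 / z ^ 2) y := by
  refine ((((hw.fun_mul hb).div_const z).fun_add (hb.div_const (z ^ 2))).const_add c).congr_deriv ?_
  ring

theorem hasDerivAt_laurent_deriv :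
    HasDerivAt (fun t => (b t - w t ^ 2 * b t ^ 2) / z - w t * b t ^ 2 / z ^ 2)
      ((-3 * w y * b y ^ 2 + 2 * w y ^ 3 * b y ^ 3) / z +
        (-b y ^ 2 + 2 * w y ^ 2 * b y ^ 3) / z ^ 2) y := by
  refine (((hasDerivAt_sub_sq_mul_sq hw hb).div_const z).fun_sub
    ((hw.fun_mul (hb.fun_pow 2)).div_const (z ^ 2))).congr_deriv ?_
  ring

theorem hasDerivAt_laurent_deriv2 :
    HasDerivAt (fun t => (-3 * w t * b t ^ 2 + 2 * w t ^ 3 * b t ^ 3) / z +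
        (-b t ^ 2 + 2 * w t ^ 2 * b t ^ 3) / z ^ 2)
      ((-3 * b y ^ 2 + 12 * w y ^ 2 * b y ^ 3 - 6 * w y ^ 4 * b y ^ 4) / z +
        (6 * w y * b y ^ 3 - 6 * w y ^ 3 * b y ^ 4) / z ^ 2) y := by
  refine (((((hw.const_mul (-3)).fun_mul (hb.fun_pow 2)).fun_add
      (((hw.fun_pow 3).const_mul 2).fun_mul (hb.fun_pow 3))).div_const z).fun_add
    ((((hb.fun_pow 2).fun_neg).fun_add
      (((hw.fun_pow 2).const_mul 2).fun_mul (hb.fun_pow 3))).div_const (z ^ 2))).congr_deriv ?_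
  ring

end Riccati

namespace AdjointWave

variable {s₁ s₂ : ℝ} {τ : ℝ → ℝ} (hτ : ∀ x : ℝ, τ x = (s₁ + x) ^ 2 / 2 + s₂)
include hτ

theorem hasDerivAt_tau (y : ℝ) : HasDerivAt τ (s₁ + y) y := by
  rw [show τ = fun t => (s₁ + t) ^ 2 / 2 + s₂ from funext hτ]
  refine (((((hasDerivAt_id y).const_add s₁).fun_pow 2).div_const 2).add_const s₂).congr_deriv ?_
  simp only [id]
  ring

theorem hasDerivAt_inv_tau {y : ℝ} (hy : τ y ≠ 0) :
    HasDerivAt (fun t => (τ t)⁻¹) (-((s₁ + y) * (τ y)⁻¹ ^ 2)) y := by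
  refine ((hasDerivAt_tau hτ y).fun_inv hy).congr_deriv ?_
  ring

theorem hasDerivAt_ofReal_inv_tau {y : ℝ} (hy : τ y ≠ 0) :
    HasDerivAt (fun t => ((τ t : ℂ))⁻¹) (-(((s₁ + y : ℝ) : ℂ) * ((τ y : ℂ))⁻¹ ^ 2)) y := by
  simpa using (hasDerivAt_inv_tau hτ hy).ofReal_comp

theorem u₁_eq_three_mul {u₁ : ℝ → ℝ}
    (hu₁ : ∀ x : ℝ, u₁ x = -3 * ((x + s₁) ^ 2 - 2 * s₂) / (2 * (τ x) ^ 2)) :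
    u₁ = fun t => 3 * ((τ t)⁻¹ - (s₁ + t) ^ 2 * (τ t)⁻¹ ^ 2) := by
  funext t
  rw [hu₁]
  rcases eq_or_ne (τ t) 0 with h | h
  · -- both sides are junk values `0` here
    simp [h]
  · field_simp
    rw [hτ]
    ring

end AdjointWave

/-- Example 7.3: with `τ(x) = (s₁+x)²/2 + s₂`, `u₁ = -3((x+s₁)² - 2s₂)/(2τ²)`,
`u₀ = -6s₂(x+s₁)/τ³`, and adjoint wave function
`Ψ*(x,z) = (1 + (s₁+x)/(τ(x) z) + 1/(τ(x) z²)) e^{-xz}`, one has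
`-Ψ*''' - u₁ Ψ*' + (u₀ - u₁') Ψ* = z³ Ψ*` for every `z ≠ 0` and every `x` with
`τ(x) ≠ 0`. -/
theorem stmt_17 (s₁ s₂ : ℝ) (τ u₀ u₁ : ℝ → ℝ)
    (hτ : ∀ x : ℝ, τ x = (s₁ + x) ^ 2 / 2 + s₂)
    (hu₁ : ∀ x : ℝ, u₁ x = -3 * ((x + s₁) ^ 2 - 2 * s₂) / (2 * (τ x) ^ 2))
    (hu₀ : ∀ x : ℝ, u₀ x = -6 * s₂ * (x + s₁) / (τ x) ^ 3)
    (Ψs : ℝ → ℂ → ℂ)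
    (hΨs : ∀ (x : ℝ) (z : ℂ),
      Ψs x z = (1 + ((s₁ : ℂ) + (x : ℂ)) / ((τ x : ℂ) * z) + 1 / ((τ x : ℂ) * z ^ 2)) *
        Complex.exp (-((x : ℂ) * z))) :
    ∀ z : ℂ, z ≠ 0 → ∀ x : ℝ, τ x ≠ 0 →
      -iteratedDeriv 3 (fun x' => Ψs x' z) x - (u₁ x : ℂ) * deriv (fun x' => Ψs x' z) x +
          ((u₀ x : ℂ) - (Complex.ofReal (deriv u₁ x))) * Ψs x z = z ^ 3 * Ψs x z := by
  intro z hz x hx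
  have hU : ∀ᶠ t in 𝓝 x, τ t ≠ 0 := (AdjointWave.hasDerivAt_tau hτ x).continuousAt.eventually_ne hx
  have hw : ∀ t : ℝ, HasDerivAt (fun t => ((s₁ + t : ℝ) : ℂ)) 1 t := fun t => by
    simpa using ((hasDerivAt_id t).const_add s₁).ofReal_comp
  have hb := fun t (ht : τ t ≠ 0) => AdjointWave.hasDerivAt_ofReal_inv_tau hτ ht
  have hΨ : ∀ t : ℝ, Ψs t z = (1 + (((s₁ + t : ℝ) : ℂ) * ((τ t : ℂ))⁻¹ / z +
      ((τ t : ℂ))⁻¹ / z ^ 2)) * Complex.exp (-(t * z)) := fun t => by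
    rw [hΨs]; push_cast; ring
  have hu₁' : deriv u₁ x =
      3 * (-3 * (s₁ + x) * (τ x)⁻¹ ^ 2 + 2 * (s₁ + x) ^ 3 * (τ x)⁻¹ ^ 3) := by
    rw [AdjointWave.u₁_eq_three_mul hτ hu₁]
    exact ((Riccati.hasDerivAt_sub_sq_mul_sq
      ((hasDerivAt_id x).const_add s₁) (AdjointWave.hasDerivAt_inv_tau hτ hx)).const_mul 3).deriv
  rw [hu₁', funext hΨ, hΨ x, iteratedDeriv_three_mul_cexp_neg_mul
      (hU.mono fun t ht => Riccati.hasDerivAt_laurent (hw t) (hb t ht) z 1)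
      (hU.mono fun t ht => Riccati.hasDerivAt_laurent_deriv (hw t) (hb t ht) z)
      (Riccati.hasDerivAt_laurent_deriv2 (hw x) (hb x hx) z),
    (Riccati.hasDerivAt_laurent (hw x) (hb x hx) z 1).mul_cexp_neg_mul.deriv,
    AdjointWave.u₁_eq_three_mul hτ hu₁, hu₀]
  have hs₂ : (s₂ : ℂ) = τ x - ((s₁ : ℂ) + x) ^ 2 / 2 := by rw [hτ]; push_cast; ring
  have hτx : (τ x : ℂ) ≠ 0 := by exact_mod_cast hx
  push_cast
  rw [hs₂]
  field_simp
  ring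
end
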